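/- arXiv:1211.4968 — 6 statements merged into one kernel-verified Lean document; each statement's English description precedes it below -/
import Mathlib

section
/- Let $F$ be an infinite subset of $\mathbb{Z}$ that is self-similar with respect to affine maps $\varphi_i(x) = a_i x + b_i$ for $i = 1, \dots, n$, where $a_i, b_i \in \mathbb{Z}$ and $|a_i| > 1$ for each $i$. Then $\sum_{i=1}^n \frac{1}{|a_i|} \le 1$. -/
/-- A subset `F` of `ℤ` is self-similar with respect to the affine maps
`x ↦ a i * x + b i`: it is the disjoint union of its images under these maps. -/
def IsSelfSimilarInt (n : ℕ) (a b : Fin n → ℤ) (F : Set ℤ) : Prop :=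
  (F = ⋃ i, (fun x => a i * x + b i) '' F) ∧
    Pairwise fun i j =>
      Disjoint ((fun x => a i * x + b i) '' F) ((fun x => a j * x + b j) '' F)

/-!
Fix `x ∈ F` and write `φ_w = φ_{i₁} ∘ ⋯ ∘ φ_{i_k}` for a word `w = i₁ ⋯ i_k`. The points `φ_w x`
lie in `F`, words of equal length give distinct points (the images are disjoint and the maps
injective), and `|φ_w x| ≤ C · |a_{i₁} ⋯ a_{i_k}|` with `C` independent of `w`. Expand
`s ^ k = (∑ 1 / |a i|) ^ k` as a sum over the words of length `k` and group the words by the number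
of occurrences of each letter: the words of one group share the multiplier `v`, so they inject into
`[-C v, C v]` and the group contributes at most `2 C + 1`. There are at most `(k + 1) ^ n` groups,
and `s ^ k ≤ (2 C + 1) (k + 1) ^ n` for every `k` forces `s ≤ 1`.
-/

open Finset Filter Topology Function

lemma Finset.card_le_of_injOn_abs_le {α : Type*} {s : Finset α} {g : α → ℤ}
    (hg : Set.InjOn g s) {R : ℤ} (hR : 0 ≤ R) (h : ∀ x ∈ s, |g x| ≤ R) :
    (#s : ℤ) ≤ 2 * R + 1 := by
  have := card_le_card_of_injOn g (fun x hx => mem_Icc.2 (abs_le.1 (h x hx))) hg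
  rw [Int.card_Icc] at this
  omega

lemma Finset.card_div_le_of_injOn_abs_le {α : Type*} {s : Finset α} {g : α → ℤ}
    (hg : Set.InjOn g s) {C v : ℤ} (hC : 0 ≤ C) (hv : 1 ≤ v) (h : ∀ x ∈ s, |g x| ≤ C * v) :
    (#s : ℝ) / v ≤ 2 * C + 1 := by
  have hcard : (#s : ℝ) ≤ 2 * (C * v) + 1 := by
    exact_mod_cast card_le_of_injOn_abs_le hg (mul_nonneg hC (by omega)) h
  have hv' : (1 : ℝ) ≤ v := by exact_mod_cast hv
  rw [div_le_iff₀ (by linarith)]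
  nlinarith

lemma le_one_of_forall_pow_le_mul_pow {s D : ℝ} (m : ℕ)
    (h : ∀ k : ℕ, s ^ k ≤ D * (k + 1) ^ m) : s ≤ 1 := by
  by_contra! hs
  have hD : 0 < D := by linarith [show (1 : ℝ) ≤ D by simpa using h 0]
  have hlim : Tendsto (fun k : ℕ => ((k + 1 : ℕ) : ℝ) ^ m / s ^ (k + 1)) atTop (𝓝 0) :=
    (tendsto_pow_const_div_const_pow_of_one_lt m hs).comp (tendsto_add_atTop_nat 1)
  obtain ⟨k, hk⟩ := (hlim.eventually (gt_mem_nhds (by positivity : 0 < 1 / (D * s)))).exists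
  have hk' : D * s * (k + 1) ^ m < s ^ (k + 1) := by
    rw [lt_div_iff₀ (by positivity), div_mul_eq_mul_div, div_lt_iff₀ (by positivity)] at hk
    push_cast at hk
    linarith
  have := mul_le_mul_of_nonneg_left (h k) (by linarith : 0 ≤ s)
  rw [pow_succ] at hk'
  linarith

def affineOrbit {ι : Type*} (a b : ι → ℤ) (x : ℤ) (w : List ι) : ℤ :=
  w.foldr (fun i y => a i * y + b i) x

section AffineOrbit

variable {ι : Type*} (a b : ι → ℤ) (x : ℤ)

@[simp]
lemma affineOrbit_nil : affineOrbit a b x [] = x := rfl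

@[simp]
lemma affineOrbit_cons (i : ι) (w : List ι) :
    affineOrbit a b x (i :: w) = a i * affineOrbit a b x w + b i := rfl

variable {a b}

/-- Adding `B` makes the bound multiplicative: `|a y + b| + B ≤ |a| (|y| + B)` once `|a| ≥ 2`. -/
lemma abs_affineOrbit_add_le {B : ℤ} (ha : ∀ i, 1 < |a i|) (hb : ∀ i, |b i| ≤ B) (w : List ι) :
    |affineOrbit a b x w| + B ≤ (w.map fun i => |a i|).prod * (|x| + B) := by
  induction w with
  | nil => simp
  | cons i w ih =>
    set y := affineOrbit a b x w
    calc |affineOrbit a b x (i :: w)| + B ≤ |a i| * |y| + 2 * B := by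
          rw [affineOrbit_cons, ← abs_mul]
          linarith [abs_add_le (a i * y) (b i), hb i]
      _ ≤ |a i| * (|y| + B) := by nlinarith [abs_nonneg (b i), hb i, ha i]
      _ ≤ |a i| * ((w.map fun i => |a i|).prod * (|x| + B)) :=
          mul_le_mul_of_nonneg_left ih (abs_nonneg _)
      _ = _ := by rw [List.map_cons, List.prod_cons, mul_assoc]

end AffineOrbit

namespace IsSelfSimilarInt

variable {n : ℕ} {a b : Fin n → ℤ} {F : Set ℤ}

lemma image_subset (hss : IsSelfSimilarInt n a b F) (i : Fin n) :
    (fun x => a i * x + b i) '' F ⊆ F :=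
  calc _ ⊆ ⋃ j, (fun x => a j * x + b j) '' F := Set.subset_iUnion_of_subset i subset_rfl
    _ = F := hss.1.symm

lemma affineOrbit_mem (hss : IsSelfSimilarInt n a b F) {x : ℤ} (hx : x ∈ F) (w : List (Fin n)) :
    affineOrbit a b x w ∈ F := by
  induction w with
  | nil => exact hx
  | cons i w ih => exact hss.image_subset i ⟨_, ih, rfl⟩

lemma affineOrbit_injective (hss : IsSelfSimilarInt n a b F) (ha : ∀ i, a i ≠ 0) {x : ℤ}
    (hx : x ∈ F) {w w' : List (Fin n)} (hlen : w.length = w'.length)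
    (h : affineOrbit a b x w = affineOrbit a b x w') : w = w' := by
  induction w generalizing w' with
  | nil => exact (List.length_eq_zero_iff.mp hlen.symm).symm
  | cons i w ih =>
    obtain _ | ⟨j, w'⟩ := w'
    · simp at hlen
    obtain rfl | hij := eq_or_ne i j
    · rw [affineOrbit_cons, affineOrbit_cons, add_left_inj, mul_right_inj' (ha i)] at h
      rw [ih (Nat.succ_injective hlen) h]
    · refine absurd (hss.2 hij) (Set.not_disjoint_iff.2 ⟨affineOrbit a b x (i :: w),
        ⟨_, hss.affineOrbit_mem hx w, rfl⟩, ?_⟩)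
      exact h ▸ ⟨_, hss.affineOrbit_mem hx w', rfl⟩

end IsSelfSimilarInt

section LetterCount

variable {ι : Type*} [Fintype ι] [DecidableEq ι]

def letterCount {k : ℕ} (p : Fin k → ι) (i : ι) : ℕ := #{j | p j = i}

lemma letterCount_mem_piFinset {k : ℕ} (p : Fin k → ι) :
    letterCount p ∈ Fintype.piFinset fun _ : ι => range (k + 1) :=
  Fintype.mem_piFinset.2 fun _ =>
    mem_range_succ_iff.2 ((card_filter_le _ _).trans (card_fin k).le)

lemma prod_comp_eq_prod_pow_letterCount {M : Type*} [CommMonoid M] {k : ℕ} (f : ι → M)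
    (p : Fin k → ι) : ∏ j, f (p j) = ∏ i, f i ^ letterCount p i := by
  rw [← Fintype.prod_fiberwise' p f]
  simp only [prod_const, card_univ, Fintype.card_subtype, letterCount]

theorem sum_one_div_abs_pow_le_of_injective (a : ι → ℤ) (ha : ∀ i, a i ≠ 0) {C : ℤ} (hC : 0 ≤ C)
    {k : ℕ} (g : (Fin k → ι) → ℤ) (hg : Injective g)
    (hbound : ∀ p, |g p| ≤ C * ∏ j, |a (p j)|) :
    (∑ i, (1 : ℝ) / |(a i : ℝ)|) ^ k ≤ (2 * C + 1) * (k + 1) ^ Fintype.card ι := by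
  have hfiber : ∀ c ∈ Fintype.piFinset fun _ : ι => range (k + 1),
      ∑ p : Fin k → ι with letterCount p = c, ∏ j, (1 : ℝ) / |(a (p j) : ℝ)| ≤ 2 * C + 1 := by
    intro c _
    set v := ∏ i, |a i| ^ c i
    have hN : ∀ p : Fin k → ι, letterCount p = c → ∏ j, |a (p j)| = v := by
      rintro p rfl
      exact prod_comp_eq_prod_pow_letterCount (fun i => |a i|) p
    have hv : 1 ≤ v := one_le_prod fun i _ => one_le_pow₀ (Int.one_le_abs (ha i))
    calc ∑ p : Fin k → ι with letterCount p = c, ∏ j, (1 : ℝ) / |(a (p j) : ℝ)|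
        = ∑ p : Fin k → ι with letterCount p = c, (1 : ℝ) / v := by
          refine sum_congr rfl fun p hp => ?_
          rw [← hN p (mem_filter.1 hp).2]
          push_cast
          rw [prod_div_distrib, prod_const_one]
      _ = #{p : Fin k → ι | letterCount p = c} / v := by rw [sum_const, nsmul_eq_mul, mul_one_div]
      _ ≤ 2 * C + 1 := card_div_le_of_injOn_abs_le hg.injOn hC hv fun p hp =>
          hN p (mem_filter.1 hp).2 ▸ hbound p
  calc (∑ i, (1 : ℝ) / |(a i : ℝ)|) ^ k
      = ∑ c ∈ Fintype.piFinset fun _ : ι => range (k + 1),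
          ∑ p : Fin k → ι with letterCount p = c, ∏ j, (1 : ℝ) / |(a (p j) : ℝ)| := by
        rw [Fintype.sum_pow, sum_fiberwise_of_maps_to fun p _ => letterCount_mem_piFinset p]
    _ ≤ ∑ c ∈ Fintype.piFinset fun _ : ι => range (k + 1), (2 * (C : ℝ) + 1) :=
        sum_le_sum hfiber
    _ = (2 * C + 1) * (k + 1) ^ Fintype.card ι := by
        rw [sum_const, Fintype.card_piFinset, prod_const, card_range, card_univ, nsmul_eq_mul,
          mul_comm]
        push_cast
        rfl

end LetterCount

/-- Naghshineh's olympiad problem: for an infinite self-similar subset of `ℤ`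
with respect to affine maps with `|a i| > 1`, one has `∑ 1/|a i| ≤ 1`. -/
theorem sum_inv_abs_le_one_of_selfSimilar
    (n : ℕ) (a b : Fin n → ℤ) (ha : ∀ i, 1 < |a i|)
    (F : Set ℤ) (hF : F.Infinite)
    (hss : IsSelfSimilarInt n a b F) :
    ∑ i, (1 : ℝ) / |(a i : ℝ)| ≤ 1 := by
  obtain ⟨x, hx⟩ := hF.nonempty
  have ha0 : ∀ i, a i ≠ 0 := fun i h => by simpa [h] using ha i
  have hb : ∀ i, |b i| ≤ ∑ j, |b j| := fun i =>
    single_le_sum (f := fun j => |b j|) (fun j _ => abs_nonneg (b j)) (mem_univ i)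
  have hB : 0 ≤ ∑ j, |b j| := sum_nonneg fun j _ => abs_nonneg (b j)
  apply le_one_of_forall_pow_le_mul_pow (Fintype.card (Fin n))
  intro k
  refine sum_one_div_abs_pow_le_of_injective a ha0 (C := |x| + ∑ j, |b j|) (by positivity)
    (fun p => affineOrbit a b x (List.ofFn p)) (fun p q h => ?_) (fun p => ?_)
  · exact List.ofFn_injective (hss.affineOrbit_injective ha0 hx (by simp) h)
  · have := abs_affineOrbit_add_le x ha hb (List.ofFn p)
    simp only [List.map_ofFn, List.prod_ofFn, Function.comp_apply] at this
    linarith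
end

section
/- Let $F$ be an infinite subset of $\mathbb{Z}$ that is self-similar with respect to affine maps $\varphi_i(x) = a_i x + b_i$ for $i = 1, \dots, n$, where $a_i, b_i \in \mathbb{Z}$ and $|a_i| > 1$. If $s \ge 0$ is a real number with $\sum_{i=1}^n |a_i|^{-s} = 1$, then $s \le 1$; that is, the fractal dimension of any infinite self-similar subset of $\mathbb{Z}$ is at most $1$. -/
/-!
Fix `x ∈ F`. By disjointness, the words `w` of length `k` give pairwise distinct points
`φ_w x ∈ ℤ`, and `|φ_w x| + B ≤ a_w (|x| + B)`, where `a_w ≥ 2 ^ k` is the product of the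
`|a i|` along `w`. Since `∑_w a_w ^ (-s) = (∑_i |a i| ^ (-s)) ^ k = 1`, for `1 < t < s`
`1 = ∑_w a_w ^ (-s) ≤ 2 ^ (k (t - s)) ∑_w a_w ^ (-t)`
`  ≤ 2 ^ (k (t - s)) (|x| + B) ^ t ∑_{m ∈ ℤ} (|m| + B) ^ (-t)`,
and the right-hand side tends to `0` as `k → ∞`.
-/

open Function Set

theorem List.foldr_mem_of_mapsTo {α ι : Type*} {φ : ι → α → α} {F : Set α}
    (hφ : ∀ i, MapsTo (φ i) F F) {x : α} (hx : x ∈ F) (w : List ι) : w.foldr φ x ∈ F := by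
  induction w with
  | nil => exact hx
  | cons i w ih => exact hφ i ih

theorem List.eq_of_foldr_eq_of_pairwise_disjoint {α ι : Type*} {φ : ι → α → α} {F : Set α}
    (hφ : ∀ i, MapsTo (φ i) F F) (hinj : ∀ i, InjOn (φ i) F)
    (hdisj : _root_.Pairwise fun i j => _root_.Disjoint (φ i '' F) (φ j '' F))
    {x : α} (hx : x ∈ F) :
    ∀ {w w' : List ι}, w.length = w'.length → w.foldr φ x = w'.foldr φ x → w = w'
  | [], [], _, _ => rfl
  | i :: w, j :: w', hlen, h => by
    have hw : w.foldr φ x ∈ F := foldr_mem_of_mapsTo hφ hx w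
    have hw' : w'.foldr φ x ∈ F := foldr_mem_of_mapsTo hφ hx w'
    replace h : φ i (w.foldr φ x) = φ j (w'.foldr φ x) := h
    obtain rfl : i = j := by
      by_contra hij
      exact Set.disjoint_left.1 (hdisj hij) (mem_image_of_mem _ hw) (h ▸ mem_image_of_mem _ hw')
    rw [eq_of_foldr_eq_of_pairwise_disjoint hφ hinj hdisj hx (by simpa using hlen)
      (hinj i hw hw' h)]

theorem List.abs_foldr_affine_add_le {R ι : Type*} [CommRing R] [LinearOrder R]
    [IsStrictOrderedRing R] {a b : ι → R} {B : R} (ha : ∀ i, 2 ≤ |a i|) (hb : ∀ i, |b i| ≤ B)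
    (x : R) (w : List ι) :
    |w.foldr (fun i y => a i * y + b i) x| + B ≤ (w.map fun i => |a i|).prod * (|x| + B) := by
  induction w with
  | nil => simp
  | cons i w ih =>
    set y := w.foldr (fun i y => a i * y + b i) x
    have hB : 0 ≤ B := (abs_nonneg _).trans (hb i)
    calc |a i * y + b i| + B ≤ |a i| * |y| + 2 * B := by
          grw [abs_add_le, abs_mul, hb i]; linarith
      _ ≤ |a i| * (|y| + B) := by nlinarith [ha i]
      _ ≤ |a i| * ((w.map fun i => |a i|).prod * (|x| + B)) := by grw [ih]
      _ = _ := by simp [mul_assoc]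

theorem Real.summable_abs_add_rpow_neg {B t : ℝ} (hB : 0 < B) (ht : 1 < t) :
    Summable fun m : ℤ => (|(m : ℝ)| + B) ^ (-t) := by
  have h := (Real.summable_one_div_nat_add_rpow B t).2 ht
  have hmB (m : ℕ) : (0 : ℝ) ≤ m + B := by positivity
  refine Summable.of_nat_of_neg ?_ ?_ <;> refine h.congr fun m => ?_ <;>
    simp [abs_of_nonneg (hmB m), Real.rpow_neg (hmB m)]

theorem Real.sum_prod_rpow_eq_sum_rpow_pow {ι : Type*} [Fintype ι] [DecidableEq ι] {f : ι → ℝ}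
    (hf : ∀ i, 0 ≤ f i) (r : ℝ) (k : ℕ) :
    ∑ w : Fin k → ι, (∏ j, f (w j)) ^ r = (∑ i, f i ^ r) ^ k := by
  rw [Fintype.sum_pow]
  exact Finset.sum_congr rfl fun (w : Fin k → ι) _ =>
    (Real.finsetProd_rpow _ _ (fun j _ => hf (w j)) r).symm

theorem sum_rpow_neg_le_of_injective {W : Type*} [Fintype W] {y : W → ℤ} (hy : Injective y)
    {P : W → ℝ} {c B K s t : ℝ} (hc : 0 < c) (hcP : ∀ w, c ≤ P w) (hB : 0 < B) (hK : 0 < K)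
    (hyP : ∀ w, |(y w : ℝ)| + B ≤ K * P w) (hts : t ≤ s) (ht : 1 < t) :
    ∑ w, P w ^ (-s) ≤ c ^ (t - s) * K ^ t * ∑' m : ℤ, (|(m : ℝ)| + B) ^ (-t) := by
  have hterm : ∀ w, P w ^ (-s) ≤ c ^ (t - s) * K ^ t * (|(y w : ℝ)| + B) ^ (-t) := by
    intro w
    have hP : 0 < P w := hc.trans_le (hcP w)
    have hKP : K ^ t * (K * P w) ^ (-t) = P w ^ (-t) := by
      rw [Real.mul_rpow hK.le hP.le, ← mul_assoc, ← Real.rpow_add hK, add_neg_cancel,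
        Real.rpow_zero, one_mul]
    calc P w ^ (-s) = P w ^ (t - s) * (K ^ t * (K * P w) ^ (-t)) := by
          rw [hKP, ← Real.rpow_add hP]; ring_nf
      _ ≤ c ^ (t - s) * (K ^ t * (|(y w : ℝ)| + B) ^ (-t)) := by
          gcongr ?_ * (_ * ?_)
          · exact Real.rpow_le_rpow_of_nonpos hc (hcP w) (by linarith)
          · exact Real.rpow_le_rpow_of_nonpos (by positivity) (hyP w) (by linarith)
      _ = _ := by ring
  calc ∑ w, P w ^ (-s) ≤ ∑ w, c ^ (t - s) * K ^ t * (|(y w : ℝ)| + B) ^ (-t) :=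
        Finset.sum_le_sum fun w _ => hterm w
    _ = c ^ (t - s) * K ^ t * ∑' w, (|(y w : ℝ)| + B) ^ (-t) := by
        rw [← Finset.mul_sum, tsum_fintype]
    _ ≤ _ := by
        gcongr
        exact tsum_comp_le_tsum_of_inj (Real.summable_abs_add_rpow_neg hB ht)
          (fun m => by positivity) hy

namespace IsSelfSimilarInt

variable {n : ℕ} {a b : Fin n → ℤ} {F : Set ℤ}

theorem mapsTo (hF : IsSelfSimilarInt n a b F) (i : Fin n) :
    MapsTo (fun x => a i * x + b i) F F := fun x hx => by
  rw [hF.1]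
  exact mem_iUnion.2 ⟨i, mem_image_of_mem _ hx⟩

theorem injective_foldr_ofFn (hF : IsSelfSimilarInt n a b F) (ha : ∀ i, a i ≠ 0) {x : ℤ}
    (hx : x ∈ F) (k : ℕ) :
    Injective fun w : Fin k → Fin n => (List.ofFn w).foldr (fun i y => a i * y + b i) x :=
  fun _ _ h => List.ofFn_injective <| List.eq_of_foldr_eq_of_pairwise_disjoint hF.mapsTo
    (fun i => (add_left_injective (b i)).comp (mul_right_injective₀ (ha i)) |>.injOn) hF.2 hx
    (by simp) h

theorem sum_prod_rpow_neg_le (hF : IsSelfSimilarInt n a b F) (ha : ∀ i, 2 ≤ |a i|) {x : ℤ}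
    (hx : x ∈ F) {B : ℤ} (hB : 0 < B) (hb : ∀ i, |b i| ≤ B) {s t : ℝ} (hts : t ≤ s) (ht : 1 < t)
    (k : ℕ) :
    ∑ w : Fin k → Fin n, (∏ j, |(a (w j) : ℝ)|) ^ (-s) ≤
      ((2 : ℝ) ^ (t - s)) ^ k * (((|x| + B : ℤ) : ℝ) ^ t * ∑' m : ℤ, (|(m : ℝ)| + B) ^ (-t)) := by
  rw [Real.rpow_pow_comm zero_le_two, ← mul_assoc]
  refine sum_rpow_neg_le_of_injective (hF.injective_foldr_ofFn ?_ hx k) (by positivity)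
    ?_ (by positivity) (by positivity) ?_ hts ht
  · exact fun i => abs_pos.1 (two_pos.trans_le (ha i))
  · intro w
    calc (2 : ℝ) ^ k = ∏ _ : Fin k, (2 : ℝ) := by simp
      _ ≤ ∏ j, |(a (w j) : ℝ)| := Finset.prod_le_prod (fun _ _ => zero_le_two)
          fun j _ => by exact_mod_cast ha (w j)
  · intro w
    have := List.abs_foldr_affine_add_le ha hb x (List.ofFn w)
    rw [List.map_ofFn, List.prod_ofFn, mul_comm] at this
    exact_mod_cast this

end IsSelfSimilarInt

theorem fractalDim_le_one_of_selfSimilar_general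
    (n : ℕ) (a b : Fin n → ℤ) (ha : ∀ i, 1 < |a i|)
    (F : Set ℤ) (hF : F.Infinite)
    (hss : IsSelfSimilarInt n a b F)
    (s : ℝ) (hbox : ∑ i, ((|a i| : ℝ)) ^ (-s) = 1) :
    s ≤ 1 := by
  obtain ⟨x, hx⟩ := hF.nonempty
  by_contra! hs
  obtain ⟨t, ht, hts⟩ := exists_between hs
  set B : ℤ := ∑ i, |b i| + 1
  have hbB : ∀ i, |b i| ≤ B := fun i =>
    (Finset.single_le_sum (fun j _ => abs_nonneg (b j)) (Finset.mem_univ i)).trans (by omega)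
  set C := ((|x| + B : ℤ) : ℝ) ^ t * ∑' m : ℤ, (|(m : ℝ)| + B) ^ (-t)
  have key (k : ℕ) : 1 ≤ ((2 : ℝ) ^ (t - s)) ^ k * C := by
    have := hss.sum_prod_rpow_neg_le (fun i => Int.add_one_le_of_lt (ha i)) hx (by positivity)
      hbB hts.le ht k
    rwa [Real.sum_prod_rpow_eq_sum_rpow_pow (f := fun i => |(a i : ℝ)|) (fun i => abs_nonneg _),
      hbox, one_pow] at this
  have hr : (2 : ℝ) ^ (t - s) < 1 := Real.rpow_lt_one_of_one_lt_of_neg one_lt_two (by linarith)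
  have hlim := (tendsto_pow_atTop_nhds_zero_of_lt_one (by positivity) hr).mul_const C
  rw [zero_mul] at hlim
  exact one_pos.not_ge (ge_of_tendsto' hlim key)

/-- The fractal dimension of an infinite self-similar subset of `ℤ` is at most `1`. -/
theorem fractalDim_le_one_of_selfSimilar
    (n : ℕ) (a b : Fin n → ℤ) (ha : ∀ i, 1 < |a i|)
    (F : Set ℤ) (hF : F.Infinite)
    (hss : IsSelfSimilarInt n a b F)
    (s : ℝ) (hs : 0 ≤ s) (hbox : ∑ i, ((|a i| : ℝ)) ^ (-s) = 1) :
    s ≤ 1 :=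
  fractalDim_le_one_of_selfSimilar_general n a b ha F hF hss s hbox
end

section
/- (Mahdavifar–Naghshineh, well-definedness of fractal dimension in $\mathbb{Z}$.) Let $F$ be an infinite subset of $\mathbb{Z}$. Suppose $F$ is self-similar with respect to affine maps $\varphi_i(x) = a_i x + b_i$ for $i = 1, \dots, n$ (with $a_i, b_i \in \mathbb{Z}$, $|a_i| > 1$) and also self-similar with respect to affine maps $\psi_j(x) = c_j x + d_j$ for $j = 1, \dots, m$ (with $c_j, d_j \in \mathbb{Z}$, $|c_j| > 1$). If $s \ge 0$ satisfies $\sum_{i=1}^n |a_i|^{-s} = 1$ and $t \ge 0$ satisfies $\sum_{j=1}^m |c_j|^{-t} = 1$, then $s = t$. In other words, the fractal dimension of $F$ does not depend on the choice of similarity maps. -/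
open Set Filter Asymptotics

section Recursion

variable {ι : Type*} [Fintype ι] {k : ι → ℕ} {s : ℝ}

theorem sum_div_rpow_eq (hks : ∑ i, (k i : ℝ) ^ (-s) = 1) {x : ℝ} (hx : 0 ≤ x) :
    ∑ i, (x / k i) ^ s = x ^ s := by
  simp_rw [Real.div_rpow hx (Nat.cast_nonneg _), div_eq_mul_inv,
    ← Real.rpow_neg (Nat.cast_nonneg _), ← Finset.mul_sum, hks, mul_one]

-- The shift by `B` absorbs the translations: `(R + B) / k - B ≤ (R - B) / k` as `k ≥ 2`.
theorem exists_le_mul_rpow_sub_of_le_sum_div {f : ℕ → ℕ} (hf : Monotone f)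
    (hk : ∀ i, 2 ≤ k i) (hs : 0 ≤ s) (hks : ∑ i, (k i : ℝ) ^ (-s) = 1) {B : ℕ}
    (hrec : ∀ R, f R ≤ ∑ i, f ((R + B) / k i)) :
    ∃ C : ℝ, 0 ≤ C ∧ ∀ R, B < R → (f R : ℝ) ≤ C * ((R - B : ℕ) : ℝ) ^ s := by
  obtain ⟨A, hA⟩ := (finite_range k).bddAbove
  set C : ℝ := max (f ((B + 1) * A)) 1
  refine ⟨C, by positivity, fun R => ?_⟩
  induction R using Nat.strong_induction_on with
  | _ R ih =>
  intro hBR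
  by_cases hR : R ≤ (B + 1) * A
  · calc (f R : ℝ) ≤ C := le_max_of_le_left (by exact_mod_cast hf hR)
      _ ≤ C * ((R - B : ℕ) : ℝ) ^ s :=
        le_mul_of_one_le_right (by positivity) (Real.one_le_rpow (by norm_cast; omega) hs)
  · have hq : ∀ i, B < (R + B) / k i ∧ (R + B) / k i < R ∧
        ((R + B) / k i - B) * k i ≤ R - B := by
      intro i
      have hkA : k i ≤ A := hA ⟨i, rfl⟩
      have := hk i
      have := Nat.mul_le_mul_left (B + 1) hkA
      have := Nat.mul_le_mul_left R (hk i)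
      have := Nat.mul_le_mul_left B (hk i)
      have := Nat.div_mul_le_self (R + B) (k i)
      refine ⟨(Nat.le_div_iff_mul_le (x := B + 1) (by omega)).2 (by omega),
        (Nat.div_lt_iff_lt_mul (by omega)).2 (by omega), ?_⟩
      rw [Nat.sub_mul]
      omega
    calc (f R : ℝ) ≤ ∑ i, (f ((R + B) / k i) : ℝ) := by exact_mod_cast hrec R
      _ ≤ ∑ i, C * (((R - B : ℕ) : ℝ) / k i) ^ s := Finset.sum_le_sum fun i _ => ?_
      _ = C * ((R - B : ℕ) : ℝ) ^ s := by
        rw [← Finset.mul_sum, sum_div_rpow_eq hks (by positivity)]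
    obtain ⟨hBq, hqR, hqk⟩ := hq i
    have hk0 : (0 : ℝ) < k i := by have := hk i; positivity
    have : ((((R + B) / k i - B : ℕ)) : ℝ) ≤ ((R - B : ℕ) : ℝ) / k i := by
      rw [le_div_iff₀ hk0]
      exact_mod_cast hqk
    refine (ih _ hqR hBq).trans ?_
    gcongr

theorem isBigO_rpow_of_le_sum_div {f : ℕ → ℕ} (hf : Monotone f) (hk : ∀ i, 2 ≤ k i)
    (hs : 0 ≤ s) (hks : ∑ i, (k i : ℝ) ^ (-s) = 1) {B : ℕ}
    (hrec : ∀ R, f R ≤ ∑ i, f ((R + B) / k i)) :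
    (fun R => (f R : ℝ)) =O[atTop] fun R => (R : ℝ) ^ s := by
  obtain ⟨C, hC, key⟩ := exists_le_mul_rpow_sub_of_le_sum_div hf hk hs hks hrec
  refine IsBigO.of_bound C ?_
  filter_upwards [eventually_gt_atTop B] with R hR
  rw [Real.norm_natCast, Real.norm_of_nonneg (by positivity)]
  exact (key R hR).trans (by gcongr; exact Nat.sub_le R B)

-- The shift by `K = maxᵢ kᵢ + B` absorbs both the translations and the rounding down in `R / k`.
theorem exists_rpow_add_le_mul_of_sum_div_le {f : ℕ → ℕ} (hf : Monotone f) {R₀ : ℕ}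
    (hR₀ : 0 < f R₀) (hk : ∀ i, 2 ≤ k i) (hs : 0 ≤ s) (hks : ∑ i, (k i : ℝ) ^ (-s) = 1)
    {B : ℕ} (hrec : ∀ R, ∑ i, f (R / k i) ≤ f (R + B)) :
    ∃ C : ℝ, ∃ K : ℕ, ∀ R, R₀ ≤ R → ((R + K : ℕ) : ℝ) ^ s ≤ C * f R := by
  obtain ⟨A, hA⟩ := (finite_range k).bddAbove
  set K := A + B
  set R₁ := R₀ * A + B
  set C : ℝ := ((R₁ + K : ℕ) : ℝ) ^ s
  refine ⟨C, K, fun R => ?_⟩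
  induction R using Nat.strong_induction_on with
  | _ R ih =>
  intro hR
  by_cases hR₁ : R ≤ R₁
  · calc ((R + K : ℕ) : ℝ) ^ s ≤ C :=
        Real.rpow_le_rpow (by positivity) (by exact_mod_cast Nat.add_le_add_right hR₁ K) hs
      _ ≤ C * f R := le_mul_of_one_le_right (by positivity)
        (by exact_mod_cast hR₀.trans_le (hf hR))
  · obtain ⟨R', rfl⟩ : ∃ R', R = R' + B := ⟨R - B, by omega⟩
    have hq : ∀ i, R₀ ≤ R' / k i ∧ R' / k i < R' + B ∧ R' + B + K ≤ (R' / k i + K) * k i := by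
      intro i
      have hkA : k i ≤ A := hA ⟨i, rfl⟩
      have := hk i
      have := Nat.mul_le_mul_left R₀ hkA
      have := Nat.mul_le_mul_left (R' + B) (hk i)
      have := Nat.mul_le_mul_left K (hk i)
      have := Nat.div_add_mod' R' (k i)
      have := Nat.mod_lt R' (by omega : 0 < k i)
      refine ⟨(Nat.le_div_iff_mul_le (by omega)).2 (by omega),
        (Nat.div_lt_iff_lt_mul (by omega)).2 (by omega), ?_⟩
      rw [Nat.add_mul]
      omega
    calc ((R' + B + K : ℕ) : ℝ) ^ s = ∑ i, (((R' + B + K : ℕ) : ℝ) / k i) ^ s :=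
          (sum_div_rpow_eq hks (by positivity)).symm
      _ ≤ ∑ i, C * f (R' / k i) := Finset.sum_le_sum fun i _ => ?_
      _ ≤ C * f (R' + B) := by
        rw [← Finset.mul_sum]
        gcongr
        exact_mod_cast hrec R'
    obtain ⟨hRq, hqR, hqk⟩ := hq i
    have hk0 : (0 : ℝ) < k i := by have := hk i; positivity
    have : ((R' + B + K : ℕ) : ℝ) / k i ≤ ((R' / k i + K : ℕ) : ℝ) := by
      rw [div_le_iff₀ hk0]
      exact_mod_cast hqk
    refine le_trans ?_ (ih _ hqR hRq)
    gcongr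

theorem rpow_isBigO_of_sum_div_le {f : ℕ → ℕ} (hf : Monotone f) {R₀ : ℕ} (hR₀ : 0 < f R₀)
    (hk : ∀ i, 2 ≤ k i) (hs : 0 ≤ s) (hks : ∑ i, (k i : ℝ) ^ (-s) = 1) {B : ℕ}
    (hrec : ∀ R, ∑ i, f (R / k i) ≤ f (R + B)) :
    (fun R : ℕ => (R : ℝ) ^ s) =O[atTop] fun R => (f R : ℝ) := by
  obtain ⟨C, K, key⟩ := exists_rpow_add_le_mul_of_sum_div_le hf hR₀ hk hs hks hrec
  refine IsBigO.of_bound C ?_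
  filter_upwards [eventually_ge_atTop R₀] with R hR
  rw [Real.norm_natCast, Real.norm_of_nonneg (by positivity)]
  exact le_trans (by gcongr; omega) (key R hR)

end Recursion

theorem le_of_natCast_rpow_isBigO {s t : ℝ}
    (h : (fun n : ℕ => (n : ℝ) ^ s) =O[atTop] fun n => (n : ℝ) ^ t) : s ≤ t := by
  by_contra! hts
  have hlittle : (fun x : ℝ => x ^ t) =o[atTop] fun x => x ^ s := by
    rw [isLittleO_iff_tendsto' ((eventually_gt_atTop 0).mono fun x hx h0 =>
      absurd h0 (Real.rpow_pos_of_pos hx s).ne')]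
    refine (tendsto_rpow_neg_atTop (sub_pos.2 hts)).congr' ?_
    filter_upwards [eventually_gt_atTop 0] with x hx
    rw [neg_sub, Real.rpow_sub hx]
  refine h.not_isLittleO (Eventually.frequently ?_)
    (hlittle.comp_tendsto tendsto_natCast_atTop_atTop)
  filter_upwards [eventually_gt_atTop 0] with n hn
  exact (Real.rpow_pos_of_pos (Nat.cast_pos.2 hn) s).ne'

noncomputable def boxCount (F : Set ℤ) (R : ℕ) : ℕ := (F ∩ Icc (-R : ℤ) R).ncard

theorem finite_inter_Icc_neg (F : Set ℤ) (R : ℕ) : (F ∩ Icc (-R : ℤ) R).Finite :=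
  (finite_Icc _ _).subset inter_subset_right

theorem boxCount_mono (F : Set ℤ) : Monotone (boxCount F) := fun R R' h =>
  ncard_le_ncard (inter_subset_inter_right _ (Icc_subset_Icc (by omega) (by omega)))
    (finite_inter_Icc_neg F R')

theorem boxCount_natAbs_pos {F : Set ℤ} {x : ℤ} (hx : x ∈ F) : 0 < boxCount F x.natAbs :=
  (ncard_pos (finite_inter_Icc_neg _ _)).2 ⟨x, hx, by rw [mem_Icc]; omega⟩

theorem affine_injective {a : ℤ} (ha : a ≠ 0) (b : ℤ) : Function.Injective fun x => a * x + b :=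
  (add_left_injective b).comp (mul_right_injective₀ ha)

section Affine

variable {ι : Type*} [Fintype ι] {F : Set ℤ} {a b : ι → ℤ} {B : ℕ}

theorem boxCount_le_sum_div (ha : ∀ i, a i ≠ 0) (hb : ∀ i, (b i).natAbs ≤ B)
    (hF : F ⊆ ⋃ i, (fun x => a i * x + b i) '' F) (R : ℕ) :
    boxCount F R ≤ ∑ i, boxCount F ((R + B) / (a i).natAbs) := by
  set q := fun i => (R + B) / (a i).natAbs
  calc boxCount F R
      ≤ (⋃ i, (fun x => a i * x + b i) '' (F ∩ Icc (-q i : ℤ) (q i))).ncard := by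
        refine ncard_le_ncard ?_ (finite_iUnion fun i => (finite_inter_Icc_neg F _).image _)
        rintro x ⟨hxF, hxR⟩
        obtain ⟨i, y, hyF, rfl⟩ := mem_iUnion.1 (hF hxF)
        refine mem_iUnion.2 ⟨i, y, ⟨hyF, ?_⟩, rfl⟩
        have := Int.natAbs_mul (a i) y
        have := hb i
        have : (a i).natAbs * y.natAbs ≤ R + B := by simp only [mem_Icc] at hxR; omega
        have : y.natAbs ≤ q i :=
          (Nat.le_div_iff_mul_le (Int.natAbs_pos.2 (ha i))).2 (by rwa [Nat.mul_comm])
        rw [mem_Icc]; omega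
    _ ≤ ∑ i, ((fun x => a i * x + b i) '' (F ∩ Icc (-q i : ℤ) (q i))).ncard :=
        ncard_iUnion_le_of_fintype _
    _ = ∑ i, boxCount F (q i) := by
        simp_rw [ncard_image_of_injective _ (affine_injective (ha _) _), boxCount]

theorem sum_div_le_boxCount (ha : ∀ i, a i ≠ 0) (hb : ∀ i, (b i).natAbs ≤ B)
    (hF : ∀ i, (fun x => a i * x + b i) '' F ⊆ F)
    (hdisj : Pairwise fun i j =>
      Disjoint ((fun x => a i * x + b i) '' F) ((fun x => a j * x + b j) '' F)) (R : ℕ) :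
    ∑ i, boxCount F (R / (a i).natAbs) ≤ boxCount F (R + B) := by
  set q := fun i => R / (a i).natAbs
  calc ∑ i, boxCount F (q i)
      = ∑ i, ((fun x => a i * x + b i) '' (F ∩ Icc (-q i : ℤ) (q i))).ncard := by
        simp_rw [ncard_image_of_injective _ (affine_injective (ha _) _), boxCount]
    _ = (⋃ i, (fun x => a i * x + b i) '' (F ∩ Icc (-q i : ℤ) (q i))).ncard := by
        rw [ncard_iUnion_of_finite (fun i => (finite_inter_Icc_neg F _).image _)
          fun i j hij => (hdisj hij).mono (image_mono inter_subset_left)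
            (image_mono inter_subset_left), finsum_eq_sum_of_fintype]
    _ ≤ boxCount F (R + B) := by
        refine ncard_le_ncard (iUnion_subset fun i => ?_) (finite_inter_Icc_neg F _)
        rintro _ ⟨y, ⟨hyF, hyR⟩, rfl⟩
        refine ⟨hF i ⟨y, hyF, rfl⟩, ?_⟩
        have hy : y.natAbs ≤ q i := by rw [mem_Icc] at hyR; omega
        have : (a i * y).natAbs ≤ R := by
          rw [Int.natAbs_mul, Nat.mul_comm]
          exact (Nat.mul_le_mul_right _ hy).trans (Nat.div_mul_le_self _ _)
        have := hb i
        simp only [mem_Icc]; push_cast; omega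

end Affine

theorem IsSelfSimilarInt.isTheta_boxCount {n : ℕ} {a b : Fin n → ℤ} {F : Set ℤ}
    (hss : IsSelfSimilarInt n a b F) (hF : F.Nonempty) (ha : ∀ i, 1 < |a i|) {s : ℝ}
    (hs : 0 ≤ s) (hbox : ∑ i, ((|a i| : ℝ)) ^ (-s) = 1) :
    (fun R => (boxCount F R : ℝ)) =Θ[atTop] fun R : ℕ => (R : ℝ) ^ s := by
  obtain ⟨B, hB⟩ := (finite_range fun i => (b i).natAbs).bddAbove
  have hb : ∀ i, (b i).natAbs ≤ B := fun i => hB ⟨i, rfl⟩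
  have hk : ∀ i, 2 ≤ (a i).natAbs := fun i => by have := ha i; rw [Int.abs_eq_natAbs] at this; omega
  have ha₀ : ∀ i, a i ≠ 0 := fun i => Int.natAbs_pos.1 (by have := hk i; omega)
  have hks : ∑ i, ((a i).natAbs : ℝ) ^ (-s) = 1 := by simpa [Nat.cast_natAbs] using hbox
  obtain ⟨x, hx⟩ := hF
  exact ⟨isBigO_rpow_of_le_sum_div (boxCount_mono F) hk hs hks
      (boxCount_le_sum_div ha₀ hb hss.1.subset),
    rpow_isBigO_of_sum_div_le (boxCount_mono F) (boxCount_natAbs_pos hx) hk hs hks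
      (sum_div_le_boxCount ha₀ hb
        (fun i => (subset_iUnion (fun j => (fun x => a j * x + b j) '' F) i).trans hss.1.symm.subset)
        hss.2)⟩

/-- (Mahdavifar–Naghshineh) The fractal dimension of an infinite self-similar
subset of `ℤ` does not depend on the choice of similarity maps. -/
theorem fractalDim_wellDefined
    (F : Set ℤ) (hF : F.Infinite)
    (n : ℕ) (a b : Fin n → ℤ) (ha : ∀ i, 1 < |a i|)
    (hss₁ : IsSelfSimilarInt n a b F)
    (m : ℕ) (c d : Fin m → ℤ) (hc : ∀ j, 1 < |c j|)
    (hss₂ : IsSelfSimilarInt m c d F)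
    (s : ℝ) (hs : 0 ≤ s) (hbox₁ : ∑ i, ((|a i| : ℝ)) ^ (-s) = 1)
    (t : ℝ) (ht : 0 ≤ t) (hbox₂ : ∑ j, ((|c j| : ℝ)) ^ (-t) = 1) :
    s = t := by
  have hθ := (hss₁.isTheta_boxCount hF.nonempty ha hs hbox₁).symm.trans
    (hss₂.isTheta_boxCount hF.nonempty hc ht hbox₂)
  exact le_antisymm (le_of_natCast_rpow_isBigO hθ.isBigO)
    (le_of_natCast_rpow_isBigO hθ.symm.isBigO)
end

section
/- (Mahdavifar–Naghshineh, monotonicity of fractal dimension in $\mathbb{Z}$.) Let $F_1 \subseteq F_2 \subseteq \mathbb{Z}$ be infinite sets such that $F_1$ is self-similar with respect to affine maps $\varphi_i(x) = a_i x + b_i$ for $i = 1, \dots, n$ (with $a_i, b_i \in \mathbb{Z}$, $|a_i| > 1$) and $F_2$ is self-similar with respect to affine maps $\psi_j(x) = c_j x + d_j$ for $j = 1, \dots, m$ (with $c_j, d_j \in \mathbb{Z}$, $|c_j| > 1$). If $s_1 \ge 0$ satisfies $\sum_{i=1}^n |a_i|^{-s_1} = 1$ and $s_2 \ge 0$ satisfies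 $\sum_{j=1}^m |c_j|^{-s_2} = 1$, then $s_1 \le s_2$; that is, $\dim(F_1) \le \dim(F_2)$. -/
/-!
Write `N_F(R)` for the number of points of `F` in `[-R, R]`. The pieces `a i • F + b i` of `F₁`
are disjoint, so `N_{F₁}(R) ≥ ∑ i, N_{F₁}((R - B) / |a i|)`; the pieces of `F₂` cover it, so
`N_{F₂}(R) ≤ ∑ j, N_{F₂}((R + D) / |c j|)`. Since `|a i| ≥ 2`, shifting the radius by
`B = ∑ i, |b i|` (resp. `D = ∑ j, |d j|`) absorbs the translations and leaves the scale recursion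
`h t ≥ ∑ i, h (t / |a i|)` (resp. `≤`), whose solutions grow at least (resp. at most) like `t ^ s`
when `∑ i, |a i| ^ (-s) = 1`. Hence `R ^ s₁ ≲ N_{F₁}(R) ≤ N_{F₂}(R) ≲ R ^ s₂`, and `s₁ ≤ s₂`.
-/

open Filter Set Function

theorem forall_ge_of_scale_induction {P : ℝ → Prop} {ρ T₀ T₁ : ℝ} (hρ : 1 < ρ)
    (hT₁ : 0 < T₁) (base : ∀ t, T₀ ≤ t → t ≤ T₁ → P t)
    (step : ∀ t, T₁ < t → (∀ u, T₀ ≤ u → u ≤ t / ρ → P u) → P t) :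
    ∀ t, T₀ ≤ t → P t := by
  have hρ₀ : 0 < ρ := zero_lt_one.trans hρ
  have upto : ∀ k : ℕ, ∀ t, T₀ ≤ t → t ≤ ρ ^ k * T₁ → P t := by
    intro k
    induction k with
    | zero => simpa using base
    | succ k ih =>
      intro t ht₀ ht
      rcases le_or_gt t T₁ with htT₁ | htT₁
      · exact base t ht₀ htT₁
      refine step t htT₁ fun u hu₀ hu => ih u hu₀ (hu.trans ?_)
      rw [div_le_iff₀ hρ₀]
      exact ht.trans_eq (by ring)
  intro t ht₀
  obtain ⟨k, hk⟩ := pow_unbounded_of_one_lt (t / T₁) hρ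
  exact upto k t ht₀ ((div_lt_iff₀ hT₁).1 hk).le

theorem exists_pos_forall_mul_le {ι : Type*} [Finite ι] (α : ι → ℝ) {T₀ : ℝ} (hT₀ : 0 < T₀) :
    ∃ T₁, 0 < T₁ ∧ ∀ i, T₀ * α i ≤ T₁ := by
  obtain ⟨M, hM⟩ := Finite.exists_le α
  refine ⟨T₀ * max M 1, by positivity, fun i => ?_⟩
  gcongr
  exact (hM i).trans (le_max_left M 1)

theorem Real.sum_rpow_div {ι : Type*} [Fintype ι] {α : ι → ℝ} {s t : ℝ} (hα : ∀ i, 0 < α i)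
    (ht : 0 ≤ t) (hsum : ∑ i, α i ^ (-s) = 1) : ∑ i, (t / α i) ^ s = t ^ s := by
  simp_rw [Real.div_rpow ht (hα _).le, div_eq_mul_inv, ← Real.rpow_neg (hα _).le,
    ← Finset.mul_sum, hsum, mul_one]

section ScaleRecursion

variable {ι : Type*} [Fintype ι] {α : ι → ℝ} {ρ s T₀ : ℝ} {h : ℝ → ℝ}

theorem exists_mul_rpow_le_of_le_sum (hρ : 1 < ρ) (hα : ∀ i, ρ ≤ α i) (hs : 0 ≤ s)
    (hsum : ∑ i, α i ^ (-s) = 1) (hT₀ : 0 < T₀) (hone : ∀ t, T₀ ≤ t → 1 ≤ h t)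
    (hrec : ∀ t, ∑ i, h (t / α i) ≤ h t) :
    ∃ c > 0, ∀ t, T₀ ≤ t → c * t ^ s ≤ h t := by
  have hα₀ : ∀ i, 0 < α i := fun i => by linarith [hα i]
  obtain ⟨T₁, hT₁, hT₀T₁⟩ := exists_pos_forall_mul_le α hT₀
  refine ⟨(T₁ ^ s)⁻¹, by positivity, forall_ge_of_scale_induction hρ hT₁ ?_ ?_⟩
  · intro t ht₀ ht₁
    calc (T₁ ^ s)⁻¹ * t ^ s ≤ (T₁ ^ s)⁻¹ * T₁ ^ s := by gcongr; linarith
      _ = 1 := inv_mul_cancel₀ (by positivity)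
      _ ≤ h t := hone t ht₀
  · intro t ht₁ ih
    have ht : 0 ≤ t := by linarith
    calc (T₁ ^ s)⁻¹ * t ^ s = ∑ i, (T₁ ^ s)⁻¹ * (t / α i) ^ s := by
          rw [← Finset.mul_sum, Real.sum_rpow_div hα₀ ht hsum]
      _ ≤ ∑ i, h (t / α i) := by
          gcongr with i
          refine ih _ ?_ (div_le_div_of_nonneg_left ht (by linarith) (hα i))
          rw [le_div_iff₀ (hα₀ i)]
          linarith [hT₀T₁ i]
      _ ≤ h t := hrec t

theorem exists_le_mul_rpow_of_sum_le (hρ : 1 < ρ) (hα : ∀ i, ρ ≤ α i) (hs : 0 ≤ s)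
    (hsum : ∑ i, α i ^ (-s) = 1) (hT₀ : 0 < T₀) (hmono : Monotone h)
    (hrec : ∀ t, h t ≤ ∑ i, h (t / α i)) :
    ∃ C, ∀ t, T₀ ≤ t → h t ≤ C * t ^ s := by
  have hα₀ : ∀ i, 0 < α i := fun i => by linarith [hα i]
  obtain ⟨T₁, hT₁, hT₀T₁⟩ := exists_pos_forall_mul_le α hT₀
  refine ⟨|h T₁| / T₀ ^ s, forall_ge_of_scale_induction hρ hT₁ ?_ ?_⟩
  · intro t ht₀ ht₁
    calc h t ≤ |h T₁| := (hmono ht₁).trans (le_abs_self _)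
      _ = |h T₁| / T₀ ^ s * T₀ ^ s := by field_simp
      _ ≤ |h T₁| / T₀ ^ s * t ^ s := by gcongr
  · intro t ht₁ ih
    have ht : 0 ≤ t := by linarith
    calc h t ≤ ∑ i, h (t / α i) := hrec t
      _ ≤ ∑ i, |h T₁| / T₀ ^ s * (t / α i) ^ s := by
          gcongr with i
          refine ih _ ?_ (div_le_div_of_nonneg_left ht (by linarith) (hα i))
          rw [le_div_iff₀ (hα₀ i)]
          linarith [hT₀T₁ i]
      _ = |h T₁| / T₀ ^ s * t ^ s := by
          rw [← Finset.mul_sum, Real.sum_rpow_div hα₀ ht hsum]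

end ScaleRecursion

theorem le_of_eventually_mul_rpow_le_mul_rpow {c C s₁ s₂ : ℝ} (hc : 0 < c)
    (h : ∀ᶠ t in atTop, c * t ^ s₁ ≤ C * t ^ s₂) : s₁ ≤ s₂ := by
  by_contra! hlt
  have hgrow := (tendsto_rpow_atTop (sub_pos.2 hlt)).eventually_gt_atTop (C / c)
  obtain ⟨t, hle, hbig, htpos⟩ := (h.and (hgrow.and (eventually_gt_atTop 0))).exists
  have : c * t ^ (s₁ - s₂) ≤ C := by
    rwa [Real.rpow_sub htpos, ← mul_div_assoc, div_le_iff₀ (by positivity)]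
  rw [div_lt_iff₀' hc] at hbig
  linarith

def absLE (R : ℝ) : Set ℤ := {x | |(x : ℝ)| ≤ R}

noncomputable def pointCount (F : Set ℤ) (R : ℝ) : ℕ := (F ∩ absLE R).ncard

theorem finite_absLE (R : ℝ) : (absLE R).Finite := by
  refine (finite_Icc (-⌈R⌉) ⌈R⌉).subset fun x (hx : |(x : ℝ)| ≤ R) => ?_
  have : |x| ≤ ⌈R⌉ := by exact_mod_cast hx.trans (Int.le_ceil R)
  exact abs_le.1 this

theorem pointCount_mono_set {F G : Set ℤ} (h : F ⊆ G) (R : ℝ) :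
    pointCount F R ≤ pointCount G R :=
  ncard_le_ncard (inter_subset_inter_left _ h) ((finite_absLE R).inter_of_right G)

theorem pointCount_mono (F : Set ℤ) : Monotone (pointCount F) := fun _ _ h =>
  ncard_le_ncard (inter_subset_inter_right F fun _ (hx : _ ≤ _) => hx.trans h)
    ((finite_absLE _).inter_of_right F)

theorem one_le_pointCount {F : Set ℤ} {x : ℤ} (hx : x ∈ F) {R : ℝ} (hR : |(x : ℝ)| ≤ R) :
    1 ≤ pointCount F R :=
  (ncard_pos ((finite_absLE R).inter_of_right F)).2 ⟨x, hx, hR⟩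

namespace IsSelfSimilarInt

variable {n : ℕ} {a b : Fin n → ℤ} {F : Set ℤ}

theorem sum_pointCount_le (hss : IsSelfSimilarInt n a b F) (ha : ∀ i, a i ≠ 0) {R : ℝ}
    {r : Fin n → ℝ} (hr : ∀ i, |(a i : ℝ)| * r i + |(b i : ℝ)| ≤ R) :
    ∑ i, pointCount F (r i) ≤ pointCount F R := by
  set piece : Fin n → Set ℤ := fun i => (fun x => a i * x + b i) '' (F ∩ absLE (r i))
  have hcard : ∀ i, (piece i).ncard = pointCount F (r i) := fun i =>
    ncard_image_of_injective _ fun x y hxy => mul_left_cancel₀ (ha i) (add_right_cancel hxy)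
  have hsub : (⋃ i, piece i) ⊆ F ∩ absLE R := by
    refine iUnion_subset fun i => ?_
    rintro _ ⟨x, ⟨hxF, hxr⟩, rfl⟩
    refine ⟨hss.1 ▸ mem_iUnion.2 ⟨i, x, hxF, rfl⟩, ?_⟩
    calc |((a i * x + b i : ℤ) : ℝ)| ≤ |(a i : ℝ)| * |(x : ℝ)| + |(b i : ℝ)| := by
          push_cast
          exact (abs_add_le _ _).trans_eq (by rw [abs_mul])
      _ ≤ |(a i : ℝ)| * r i + |(b i : ℝ)| := by gcongr; exact hxr
      _ ≤ R := hr i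
  have hdisj : Pairwise (Disjoint on piece) := fun i j hij =>
    (hss.2 hij).mono (image_mono inter_subset_left) (image_mono inter_subset_left)
  calc ∑ i, pointCount F (r i) = (⋃ i, piece i).ncard := by
        rw [ncard_iUnion_of_finite (fun i => ((finite_absLE _).inter_of_right F).image _) hdisj,
          finsum_eq_sum_of_fintype]
        exact Finset.sum_congr rfl fun i _ => (hcard i).symm
    _ ≤ pointCount F R := ncard_le_ncard hsub ((finite_absLE R).inter_of_right F)

theorem pointCount_le_sum (hss : IsSelfSimilarInt n a b F) (ha : ∀ i, a i ≠ 0) {R : ℝ}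
    {r : Fin n → ℝ} (hr : ∀ i, R + |(b i : ℝ)| ≤ |(a i : ℝ)| * r i) :
    pointCount F R ≤ ∑ i, pointCount F (r i) := by
  set piece : Fin n → Set ℤ := fun i => (fun x => a i * x + b i) '' (F ∩ absLE (r i))
  have hcard : ∀ i, (piece i).ncard = pointCount F (r i) := fun i =>
    ncard_image_of_injective _ fun x y hxy => mul_left_cancel₀ (ha i) (add_right_cancel hxy)
  have hsub : F ∩ absLE R ⊆ ⋃ i, piece i := by
    rintro _ ⟨hxF, hxR⟩
    obtain ⟨i, x, hx, rfl⟩ := mem_iUnion.1 (hss.1 ▸ hxF)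
    refine mem_iUnion.2 ⟨i, x, ⟨hx, ?_⟩, rfl⟩
    have hai : (0 : ℝ) < |(a i : ℝ)| := abs_pos.2 (Int.cast_ne_zero.2 (ha i))
    refine le_of_mul_le_mul_left ?_ hai
    calc |(a i : ℝ)| * |(x : ℝ)| = |((a i * x + b i : ℤ) : ℝ) - b i| := by
          push_cast; rw [add_sub_cancel_right, abs_mul]
      _ ≤ |((a i * x + b i : ℤ) : ℝ)| + |(b i : ℝ)| := abs_sub _ _
      _ ≤ R + |(b i : ℝ)| := by gcongr; exact hxR
      _ ≤ |(a i : ℝ)| * r i := hr i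
  calc pointCount F R ≤ (⋃ i, piece i).ncard :=
        ncard_le_ncard hsub (finite_iUnion fun i => ((finite_absLE _).inter_of_right F).image _)
    _ ≤ ∑ i, (piece i).ncard := ncard_iUnion_le_of_fintype piece
    _ = ∑ i, pointCount F (r i) := Finset.sum_congr rfl fun i _ => hcard i

theorem exists_mul_rpow_le_pointCount (hss : IsSelfSimilarInt n a b F) (ha : ∀ i, 1 < |a i|)
    (hF : F.Nonempty) {s : ℝ} (hs : 0 ≤ s) (hbox : ∑ i, ((|a i| : ℝ)) ^ (-s) = 1) :
    ∃ c > 0, ∀ᶠ R in atTop, c * R ^ s ≤ pointCount F R := by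
  obtain ⟨x₀, hx₀⟩ := hF
  set B : ℝ := ∑ i, |(b i : ℝ)|
  have hbB : ∀ i, |(b i : ℝ)| ≤ B := fun i =>
    Finset.single_le_sum (fun j _ => abs_nonneg (b j : ℝ)) (Finset.mem_univ i)
  have hB : 0 ≤ B := Finset.sum_nonneg fun i _ => abs_nonneg _
  have ha₂ : ∀ i, (2 : ℝ) ≤ |(a i : ℝ)| := fun i => by exact_mod_cast ha i
  obtain ⟨c, hc, hlow⟩ := exists_mul_rpow_le_of_le_sum (T₀ := |(x₀ : ℝ)| + B + 1)
    (h := fun t => (pointCount F (t - B) : ℝ)) one_lt_two ha₂ hs hbox (by positivity)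
    (fun t ht => by exact_mod_cast one_le_pointCount hx₀ (by linarith))
    (fun t => by
      have := hss.sum_pointCount_le (R := t - B) (r := fun i => t / |(a i : ℝ)| - B)
        (fun i => abs_pos.1 (one_pos.trans (ha i))) fun i => by
          rw [mul_sub, mul_div_cancel₀ _ (by linarith [ha₂ i])]
          nlinarith [hbB i, ha₂ i]
      exact_mod_cast this)
  refine ⟨c, hc, eventually_atTop.2 ⟨_, fun t ht => (hlow t ht).trans ?_⟩⟩
  exact_mod_cast pointCount_mono F (by linarith)

theorem exists_pointCount_le_mul_rpow (hss : IsSelfSimilarInt n a b F) (ha : ∀ i, 1 < |a i|)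
    {s : ℝ} (hs : 0 ≤ s) (hbox : ∑ i, ((|a i| : ℝ)) ^ (-s) = 1) :
    ∃ C, ∀ᶠ R in atTop, (pointCount F R : ℝ) ≤ C * R ^ s := by
  set D : ℝ := ∑ i, |(b i : ℝ)|
  have hbD : ∀ i, |(b i : ℝ)| ≤ D := fun i =>
    Finset.single_le_sum (fun j _ => abs_nonneg (b j : ℝ)) (Finset.mem_univ i)
  have hD : 0 ≤ D := Finset.sum_nonneg fun i _ => abs_nonneg _
  have ha₂ : ∀ i, (2 : ℝ) ≤ |(a i : ℝ)| := fun i => by exact_mod_cast ha i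
  obtain ⟨C, hup⟩ := exists_le_mul_rpow_of_sum_le (T₀ := 1)
    (h := fun t => (pointCount F (t + D) : ℝ)) one_lt_two ha₂ hs hbox one_pos
    (fun t u htu => Nat.cast_le.2 (pointCount_mono F (by linarith)))
    (fun t => by
      have := hss.pointCount_le_sum (R := t + D) (r := fun i => t / |(a i : ℝ)| + D)
        (fun i => abs_pos.1 (one_pos.trans (ha i))) fun i => by
          rw [mul_add, mul_div_cancel₀ _ (by linarith [ha₂ i])]
          nlinarith [hbD i, ha₂ i]
      exact_mod_cast this)
  refine ⟨C, eventually_atTop.2 ⟨1, fun t ht => le_trans ?_ (hup t ht)⟩⟩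
  exact_mod_cast pointCount_mono F (by linarith)

end IsSelfSimilarInt

theorem fractalDim_mono_general
    (F₁ F₂ : Set ℤ) (hsub : F₁ ⊆ F₂) (hF₁ : F₁.Infinite)
    (n : ℕ) (a b : Fin n → ℤ) (ha : ∀ i, 1 < |a i|)
    (hss₁ : IsSelfSimilarInt n a b F₁)
    (m : ℕ) (c d : Fin m → ℤ) (hc : ∀ j, 1 < |c j|)
    (hss₂ : IsSelfSimilarInt m c d F₂)
    (s₁ : ℝ) (hs₁ : 0 ≤ s₁) (hbox₁ : ∑ i, ((|a i| : ℝ)) ^ (-s₁) = 1)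
    (s₂ : ℝ) (hs₂ : 0 ≤ s₂) (hbox₂ : ∑ j, ((|c j| : ℝ)) ^ (-s₂) = 1) :
    s₁ ≤ s₂ := by
  obtain ⟨κ, hκ, hlow⟩ := hss₁.exists_mul_rpow_le_pointCount ha hF₁.nonempty hs₁ hbox₁
  obtain ⟨K, hup⟩ := hss₂.exists_pointCount_le_mul_rpow hc hs₂ hbox₂
  refine le_of_eventually_mul_rpow_le_mul_rpow (C := K) hκ ?_
  filter_upwards [hlow, hup] with R hR₁ hR₂
  exact hR₁.trans ((Nat.cast_le.2 (pointCount_mono_set hsub R)).trans hR₂)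

/-- (Mahdavifar–Naghshineh) Monotonicity of fractal dimension for nested infinite
self-similar subsets of `ℤ`. -/
theorem fractalDim_mono
    (F₁ F₂ : Set ℤ) (hsub : F₁ ⊆ F₂) (hF₁ : F₁.Infinite) (hF₂ : F₂.Infinite)
    (n : ℕ) (a b : Fin n → ℤ) (ha : ∀ i, 1 < |a i|)
    (hss₁ : IsSelfSimilarInt n a b F₁)
    (m : ℕ) (c d : Fin m → ℤ) (hc : ∀ j, 1 < |c j|)
    (hss₂ : IsSelfSimilarInt m c d F₂)
    (s₁ : ℝ) (hs₁ : 0 ≤ s₁) (hbox₁ : ∑ i, ((|a i| : ℝ)) ^ (-s₁) = 1)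
    (s₂ : ℝ) (hs₂ : 0 ≤ s₂) (hbox₂ : ∑ j, ((|c j| : ℝ)) ^ (-s₂) = 1) :
    s₁ ≤ s₂ :=
  fractalDim_mono_general F₁ F₂ hsub hF₁ n a b ha hss₁ m c d hc hss₂ s₁ hs₁ hbox₁ s₂ hs₂ hbox₂
end

section
/- (Well-definedness of fractal dimension in the Gaussian integers.) Let $F$ be an infinite subset of $\mathbb{Z}[i]$. Suppose $F$ is self-similar with respect to affine maps $\varphi_i(x) = a_i x + b_i$ for $i = 1, \dots, n$ (with $a_i, b_i \in \mathbb{Z}[i]$, $N(a_i) > 1$) and also self-similar with respect to affine maps $\psi_j(x) = c_j x + d_j$ for $j = 1, \dots, m$ (with $c_j, d_j \in \mathbb{Z}[i]$, $N(c_j) > 1$), where $N$ denotes the norm $N(u + vi) = u^2 + v^2$. If $s \ge 0$ satisfies $\sum_{i=1}^n N(a_i)^{-s} = 1$ and $t \ge 0$ satisfies $\sum_{j=1}^m N(c_j)^{-t} = 1$, then $s = t$. -/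
/-- A subset `F` of the Gaussian integers `ℤ[i]` is self-similar with respect to the
affine maps `x ↦ a i * x + b i`: it is the disjoint union of its images. -/
def IsSelfSimilarGaussianInt (n : ℕ) (a b : Fin n → GaussianInt) (F : Set GaussianInt) : Prop :=
  (F = ⋃ i, (fun x => a i * x + b i) '' F) ∧
    Pairwise fun i j =>
      Disjoint ((fun x => a i * x + b i) '' F) ((fun x => a j * x + b j) '' F)

/-!
Let `C(r)` count the points of `F` in the disc `|x| ≤ r`. As `F` is covered by the images
`aᵢ F + bᵢ`, `C(r) ≤ ∑ᵢ C((r + B) / |aᵢ|)`; since `|aᵢ| ≥ √2`, induction over the scales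
`r, r/γ, r/γ², …` turns this into `C(r) = O(r^{2u})` whenever `∑ᵢ N(aᵢ)^{-u} < 1`, i.e. for
every `u > s`. As the images `cⱼ F + dⱼ` are disjoint subsets of `F`,
`∑ⱼ C((r - B) / |cⱼ|) ≤ C(r)`, and the same induction gives `C(r) ≥ k r^{2v}` with `k > 0`
for every `v < t`. Hence `t ≤ s`, and `s = t` by symmetry.
-/

open Set Filter Topology Real

theorem Real.scale_induction {P : ℝ → Prop} {R₀ γ : ℝ} (hR₀ : 0 < R₀) (hγ : 1 < γ)
    (step : ∀ r, R₀ ≤ r → (∀ r', R₀ ≤ r' → r' ≤ r / γ → P r') → P r) {r : ℝ}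
    (hr : R₀ ≤ r) : P r := by
  have below_pow : ∀ k : ℕ, ∀ r, R₀ ≤ r → r < R₀ * γ ^ k → P r := by
    intro k
    induction k with
    | zero => intro r hr hr'; simp only [pow_zero, mul_one] at hr'; linarith
    | succ k ih =>
      intro r hr hr'
      refine step r hr fun r' hr₀' hr'' =>
        ih r' hr₀' (lt_of_mul_lt_mul_right ?_ (by linarith : 0 ≤ γ))
      rw [le_div_iff₀ (by linarith)] at hr''
      calc r' * γ ≤ r := hr''
        _ < R₀ * γ ^ (k + 1) := hr'
        _ = R₀ * γ ^ k * γ := by ring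
  obtain ⟨k, hk⟩ := pow_unbounded_of_one_lt (r / R₀) hγ
  exact below_pow k r hr (by rwa [div_lt_iff₀ hR₀, mul_comm] at hk)

theorem Real.tendsto_rpow_mul_nhds_one {p : ℝ} (hp : 0 ≤ p) (a : ℝ) :
    Tendsto (fun x : ℝ => x ^ p * a) (𝓝 1) (𝓝 a) := by
  simpa using (continuousAt_rpow_const 1 p (Or.inr hp)).tendsto.mul_const a

theorem Real.exists_rpow_mul_lt_one {q p ρ : ℝ} (hq : 1 < q) (hp : 0 ≤ p) (hρ : ρ < 1) :
    ∃ θ, 1 < θ ∧ θ < q ∧ θ ^ p * ρ < 1 := by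
  obtain ⟨θ, ⟨hθq, hθρ⟩, hθ⟩ := (((eventually_lt_nhds hq).and
    ((tendsto_rpow_mul_nhds_one hp ρ).eventually_lt_const hρ)).filter_mono nhdsWithin_le_nhds
    |>.and (self_mem_nhdsWithin : Ioi (1 : ℝ) ∈ 𝓝[>] 1)).exists
  exact ⟨θ, hθ, hθq, hθρ⟩

theorem Real.exists_one_lt_rpow_mul {p ρ : ℝ} (hp : 0 ≤ p) (hρ : 1 < ρ) :
    ∃ θ, 0 < θ ∧ θ < 1 ∧ 1 < θ ^ p * ρ := by
  obtain ⟨θ, hθρ, hθ⟩ := (((tendsto_rpow_mul_nhds_one hp ρ).eventually_const_lt hρ).filter_mono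
    nhdsWithin_le_nhds |>.and (Ioo_mem_nhdsLT zero_lt_one)).exists
  exact ⟨θ, hθ.1, hθ.2, hθρ⟩

theorem Real.sum_div_rpow {ι : Type*} [Fintype ι] {A : ι → ℝ} (hA : ∀ i, 0 ≤ A i)
    {x : ℝ} (hx : 0 ≤ x) (p : ℝ) : ∑ i, (x / A i) ^ p = x ^ p * ∑ i, A i ^ (-p) := by
  rw [Finset.mul_sum]
  exact Finset.sum_congr rfl fun i _ => by
    rw [div_rpow hx (hA i), rpow_neg (hA i), div_eq_mul_inv]

theorem Real.sum_rpow_neg_strictAnti {ι : Type*} [Fintype ι] [Nonempty ι] {x : ι → ℝ}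
    (hx : ∀ i, 1 < x i) : StrictAnti fun s : ℝ => ∑ i, x i ^ (-s) := fun _ _ hst =>
  Finset.sum_lt_sum_of_nonempty Finset.univ_nonempty fun i _ =>
    rpow_lt_rpow_of_exponent_lt (hx i) (neg_lt_neg hst)

theorem le_of_eventually_mul_rpow_le_mul_rpow_s5 {k K p q : ℝ} (hk : 0 < k)
    (h : ∀ᶠ r in atTop, k * r ^ q ≤ K * r ^ p) : q ≤ p := by
  by_contra! hpq
  obtain ⟨r, hle, hr, hbig⟩ := (h.and ((eventually_gt_atTop 0).and
    ((tendsto_rpow_atTop (sub_pos.2 hpq)).eventually_gt_atTop (K / k)))).exists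
  have hsplit : r ^ q = r ^ (q - p) * r ^ p := by rw [← rpow_add hr, sub_add_cancel]
  have hK : K < k * r ^ (q - p) := (div_lt_iff₀' hk).1 hbig
  have hrp : 0 < r ^ p := rpow_pos_of_pos hr p
  nlinarith

section Growth

variable {ι : Type*} [Fintype ι] {C : ℝ → ℝ} {q B p : ℝ}

theorem exists_eventually_le_mul_rpow_of_le_sum (hC : Monotone C) {A : ι → ℝ}
    (hq : 1 < q) (hA : ∀ i, q ≤ A i) (hB : 0 ≤ B) (hp : 0 ≤ p) (hρ : ∑ i, A i ^ (-p) < 1)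
    (hrec : ∀ r, C r ≤ ∑ i, C ((r + B) / A i)) :
    ∃ K, ∀ᶠ r in atTop, C r ≤ K * r ^ p := by
  set ρ := ∑ i, A i ^ (-p)
  have hApos : ∀ i, 0 < A i := fun i => by linarith [hA i]
  obtain ⟨θ, hθ, hθq, hθρ⟩ := exists_rpow_mul_lt_one hq hp hρ
  obtain ⟨R₀, hR₀, hBR₀⟩ : ∃ R₀, 0 < R₀ ∧ B ≤ (θ - 1) * R₀ :=
    ⟨B / (θ - 1) + 1, by have := sub_pos.2 hθ; positivity, by
      rw [mul_add, mul_div_cancel₀ _ (sub_pos.2 hθ).ne']; linarith⟩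
  set C₀ := max (C R₀) 0
  -- chosen so that the at most `card ι` terms with radius below `R₀`, each `≤ C₀`, are absorbed
  -- by the gain `1 - θ ^ p * ρ` of the terms above `R₀`
  set K := Fintype.card ι * C₀ / ((1 - θ ^ p * ρ) * R₀ ^ p)
  have hK : 0 ≤ K := by have := rpow_pos_of_pos hR₀ p; have := sub_pos.2 hθρ; positivity
  refine ⟨K, (eventually_ge_atTop R₀).mono fun r hr => ?_⟩
  refine Real.scale_induction (P := fun r => C r ≤ K * r ^ p) hR₀
    ((one_lt_div (by linarith)).2 hθq) (fun r hr ih => ?_) hr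
  have hrpos : 0 < r := hR₀.trans_le hr
  have hrB : r + B ≤ θ * r := by nlinarith
  have hterm : ∀ i, C ((r + B) / A i) ≤ K * (θ * r / A i) ^ p + C₀ := by
    intro i
    have hle : (r + B) / A i ≤ θ * r / A i := div_le_div_of_nonneg_right hrB (hApos i).le
    by_cases hbig : R₀ ≤ (r + B) / A i
    · have hsmall : (r + B) / A i ≤ r / (q / θ) := calc
          (r + B) / A i ≤ θ * r / A i := hle
          _ ≤ θ * r / q := div_le_div_of_nonneg_left (by positivity) (by linarith) (hA i)
          _ = r / (q / θ) := by field_simp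
      calc C ((r + B) / A i) ≤ K * ((r + B) / A i) ^ p := ih _ hbig hsmall
        _ ≤ K * (θ * r / A i) ^ p := by gcongr; linarith
        _ ≤ _ := le_add_of_nonneg_right (le_max_right _ _)
    · calc C ((r + B) / A i) ≤ C R₀ := hC (not_le.1 hbig).le
        _ ≤ C₀ := le_max_left _ _
        _ ≤ _ := le_add_of_nonneg_left
          (mul_nonneg hK (rpow_nonneg (div_nonneg (by positivity) (hApos i).le) _))
  have hcard : Fintype.card ι * C₀ ≤ K * (1 - θ ^ p * ρ) * r ^ p := calc
    Fintype.card ι * C₀ = K * (1 - θ ^ p * ρ) * R₀ ^ p := by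
      have := rpow_pos_of_pos hR₀ p
      rw [mul_assoc, div_mul_cancel₀ _ (mul_pos (by linarith) this).ne']
    _ ≤ K * (1 - θ ^ p * ρ) * r ^ p := by gcongr
  calc C r ≤ ∑ i, C ((r + B) / A i) := hrec r
    _ ≤ ∑ i, (K * (θ * r / A i) ^ p + C₀) := Finset.sum_le_sum fun i _ => hterm i
    _ = K * (θ * r) ^ p * ρ + Fintype.card ι * C₀ := by
      rw [Finset.sum_add_distrib, ← Finset.mul_sum, sum_div_rpow (fun i => (hApos i).le)
        (by positivity), Finset.sum_const, Finset.card_univ, nsmul_eq_mul, mul_assoc]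
    _ ≤ K * r ^ p := by rw [mul_rpow (by linarith) hrpos.le]; nlinarith

theorem exists_eventually_mul_rpow_le_of_sum_le (hC : Monotone C) {D : ι → ℝ}
    (hq : 1 < q) (hD : ∀ j, q ≤ D j) (hB : 0 ≤ B) (hp : 0 ≤ p) (hρ : 1 < ∑ j, D j ^ (-p))
    (hrec : ∀ r, ∑ j, C ((r - B) / D j) ≤ C r) {r₀ : ℝ} (hr₀ : 0 < C r₀) :
    ∃ k > 0, ∀ᶠ r in atTop, k * r ^ p ≤ C r := by
  set ρ := ∑ j, D j ^ (-p)
  have hDpos : ∀ j, 0 < D j := fun j => by linarith [hD j]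
  obtain ⟨θ, hθ0, hθ, hθρ⟩ := exists_one_lt_rpow_mul hp hρ
  obtain ⟨M, hM⟩ := Finite.exists_le D
  obtain ⟨R₁, hR₁, hr₀R₁, hBR₁⟩ : ∃ R₁, 0 < R₁ ∧ r₀ ≤ R₁ ∧ B ≤ (1 - θ) * R₁ := by
    have := sub_pos.2 hθ
    refine ⟨B / (1 - θ) + max r₀ 1, by positivity, ?_, ?_⟩
    · linarith [le_max_left r₀ 1, div_nonneg hB this.le]
    · rw [mul_add, mul_div_cancel₀ _ this.ne']; nlinarith [le_max_right r₀ 1]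
  -- above `R₂` every radius `(r - B) / D j` is at least `R₁`, so the induction hypothesis applies
  set R₂ := R₁ * max M 1 / θ
  have hR₂ : 0 < R₂ := by positivity
  set k := C r₀ / R₂ ^ p
  have hk : 0 < k := by have := rpow_pos_of_pos hR₂ p; positivity
  refine ⟨k, hk, (eventually_ge_atTop R₁).mono fun r hr => ?_⟩
  refine Real.scale_induction (P := fun r => k * r ^ p ≤ C r) hR₁ hq (fun r hr ih => ?_) hr
  have hrpos : 0 < r := hR₁.trans_le hr
  rcases le_or_gt r R₂ with hsmall | hlarge
  · calc k * r ^ p ≤ k * R₂ ^ p := by gcongr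
      _ = C r₀ := div_mul_cancel₀ _ (rpow_pos_of_pos hR₂ p).ne'
      _ ≤ C r := hC (hr₀R₁.trans hr)
  have hrB : θ * r ≤ r - B := by nlinarith
  have hterm : ∀ j, k * (θ * r / D j) ^ p ≤ C ((r - B) / D j) := by
    intro j
    have hle : θ * r / D j ≤ (r - B) / D j := div_le_div_of_nonneg_right hrB (hDpos j).le
    have hbig : R₁ ≤ θ * r / D j := by
      rw [le_div_iff₀ (hDpos j)]
      calc R₁ * D j ≤ R₁ * max M 1 :=
            mul_le_mul_of_nonneg_left ((hM j).trans (le_max_left _ _)) hR₁.le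
        _ = θ * R₂ := by simp only [R₂]; field_simp
        _ ≤ θ * r := by gcongr
    have hsmall : (r - B) / D j ≤ r / q := calc
      (r - B) / D j ≤ r / D j := div_le_div_of_nonneg_right (by linarith) (hDpos j).le
      _ ≤ r / q := div_le_div_of_nonneg_left hrpos.le (by linarith) (hD j)
    calc k * (θ * r / D j) ^ p ≤ k * ((r - B) / D j) ^ p := by
          gcongr; exact div_nonneg (by positivity) (hDpos j).le
      _ ≤ C ((r - B) / D j) := ih _ (hbig.trans hle) hsmall
  calc k * r ^ p ≤ k * r ^ p * (θ ^ p * ρ) := le_mul_of_one_le_right (by positivity) hθρ.le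
    _ = k * (θ * r) ^ p * ρ := by rw [mul_rpow hθ0.le hrpos.le]; ring
    _ = ∑ j, k * (θ * r / D j) ^ p := by
      rw [← Finset.mul_sum, sum_div_rpow (fun j => (hDpos j).le) (by positivity), mul_assoc]
    _ ≤ ∑ j, C ((r - B) / D j) := Finset.sum_le_sum fun j _ => hterm j
    _ ≤ C r := hrec r

end Growth

namespace GaussianInt

theorem finite_setOf_norm_le (r : ℝ) : {x : GaussianInt | ‖(x : ℂ)‖ ≤ r}.Finite := by
  have hIcc : ∀ z : ℤ, |(z : ℝ)| ≤ r → z ∈ Icc (-⌊r⌋) ⌊r⌋ := fun z hz =>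
    abs_le.1 (Int.le_floor.2 (by rwa [Int.cast_abs]))
  refine (((finite_Icc (-⌊r⌋) ⌊r⌋).prod (finite_Icc (-⌊r⌋) ⌊r⌋)).preimage
    (f := fun x : GaussianInt => (x.re, x.im)) fun x _ y _ h =>
      Zsqrtd.ext_iff.2 (Prod.ext_iff.1 h)).subset fun x hx => ⟨?_, ?_⟩
  · exact hIcc _ (by rw [intCast_re]; exact (Complex.abs_re_le_norm _).trans hx)
  · exact hIcc _ (by rw [intCast_im]; exact (Complex.abs_im_le_norm _).trans hx)

theorem norm_le_div_of_norm_mul_add_le {a b x : GaussianInt} {B r : ℝ} (ha : a ≠ 0)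
    (hb : ‖(b : ℂ)‖ ≤ B) (h : ‖((a * x + b : GaussianInt) : ℂ)‖ ≤ r) :
    ‖(x : ℂ)‖ ≤ (r + B) / ‖(a : ℂ)‖ := by
  rw [le_div_iff₀' (norm_pos_iff.2 (toComplex_eq_zero.not.2 ha)), ← norm_mul]
  calc ‖(a : ℂ) * x‖ ≤ ‖((a * x + b : GaussianInt) : ℂ)‖ + ‖(b : ℂ)‖ := by
        simpa using norm_sub_le ((a : ℂ) * x + b) b
    _ ≤ r + B := add_le_add h hb

theorem norm_mul_add_le_of_norm_le_div {a b x : GaussianInt} {B r : ℝ} (ha : a ≠ 0)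
    (hb : ‖(b : ℂ)‖ ≤ B) (h : ‖(x : ℂ)‖ ≤ (r - B) / ‖(a : ℂ)‖) :
    ‖((a * x + b : GaussianInt) : ℂ)‖ ≤ r := by
  rw [le_div_iff₀' (norm_pos_iff.2 (toComplex_eq_zero.not.2 ha)), ← norm_mul] at h
  calc ‖((a * x + b : GaussianInt) : ℂ)‖ ≤ ‖(a : ℂ) * x‖ + ‖(b : ℂ)‖ := by
        simpa using norm_add_le ((a : ℂ) * x) b
    _ ≤ r := by linarith

theorem sqrt_two_le_norm {x : GaussianInt} (hx : 1 < Zsqrtd.norm x) : √2 ≤ ‖(x : ℂ)‖ := by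
  rw [Complex.norm_def, ← intCast_real_norm]
  exact sqrt_le_sqrt (by exact_mod_cast hx)

theorem norm_rpow_neg_two_mul (x : GaussianInt) (u : ℝ) :
    ‖(x : ℂ)‖ ^ (-(2 * u)) = (Zsqrtd.norm x : ℝ) ^ (-u) := by
  rw [neg_mul_eq_mul_neg, rpow_mul (_root_.norm_nonneg _), rpow_two, Complex.sq_norm,
    intCast_real_norm]

noncomputable def ballCount (F : Set GaussianInt) (r : ℝ) : ℝ :=
  (F ∩ {x | ‖(x : ℂ)‖ ≤ r}).ncard

theorem finite_inter_setOf_norm_le (F : Set GaussianInt) (r : ℝ) :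
    (F ∩ {x | ‖(x : ℂ)‖ ≤ r}).Finite :=
  (finite_setOf_norm_le r).inter_of_right F

theorem ballCount_mono (F : Set GaussianInt) : Monotone (ballCount F) := fun _ r' h =>
  Nat.cast_le.2 (ncard_le_ncard (inter_subset_inter_right _ fun _ hx => le_trans hx h)
    (finite_inter_setOf_norm_le F r'))

theorem ballCount_norm_pos {F : Set GaussianInt} {x : GaussianInt} (hx : x ∈ F) :
    0 < ballCount F ‖(x : ℂ)‖ :=
  Nat.cast_pos.2 ((ncard_pos (finite_inter_setOf_norm_le F _)).2 ⟨x, hx, le_refl ‖(x : ℂ)‖⟩)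

variable {ι : Type*} [Fintype ι] {F : Set GaussianInt}

theorem ballCount_le_sum_of_subset_iUnion {a b : ι → GaussianInt} {B : ℝ}
    (hF : F ⊆ ⋃ i, (fun x => a i * x + b i) '' F) (ha : ∀ i, a i ≠ 0)
    (hb : ∀ i, ‖(b i : ℂ)‖ ≤ B) (r : ℝ) :
    ballCount F r ≤ ∑ i, ballCount F ((r + B) / ‖(a i : ℂ)‖) := by
  set S := fun i => F ∩ {x : GaussianInt | ‖(x : ℂ)‖ ≤ (r + B) / ‖(a i : ℂ)‖}
  have hcover : F ∩ {y | ‖(y : ℂ)‖ ≤ r} ⊆ ⋃ i, (fun x => a i * x + b i) '' S i := by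
    rintro y ⟨hyF, hyr⟩
    obtain ⟨i, x, hx, rfl⟩ := mem_iUnion.1 (hF hyF)
    exact mem_iUnion.2 ⟨i, x, ⟨hx, norm_le_div_of_norm_mul_add_le (ha i) (hb i) hyr⟩, rfl⟩
  have hcard : (F ∩ {y | ‖(y : ℂ)‖ ≤ r}).ncard ≤ ∑ i, (S i).ncard := calc
    _ ≤ (⋃ i, (fun x => a i * x + b i) '' S i).ncard :=
      ncard_le_ncard hcover (finite_iUnion fun i => (finite_inter_setOf_norm_le F _).image _)
    _ ≤ ∑ i, ((fun x => a i * x + b i) '' S i).ncard := ncard_iUnion_le_of_fintype _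
    _ ≤ ∑ i, (S i).ncard :=
      Finset.sum_le_sum fun i _ => ncard_image_le (finite_inter_setOf_norm_le F _)
  unfold ballCount
  exact_mod_cast hcard

theorem sum_ballCount_le_of_pairwise_disjoint {c d : ι → GaussianInt} {B : ℝ}
    (hF : ∀ j, (fun x => c j * x + d j) '' F ⊆ F)
    (hdisj : Pairwise fun i j =>
      Disjoint ((fun x => c i * x + d i) '' F) ((fun x => c j * x + d j) '' F))
    (hc : ∀ j, c j ≠ 0) (hd : ∀ j, ‖(d j : ℂ)‖ ≤ B) (r : ℝ) :
    ∑ j, ballCount F ((r - B) / ‖(c j : ℂ)‖) ≤ ballCount F r := by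
  set T := fun j =>
    (fun x => c j * x + d j) '' (F ∩ {x | ‖(x : ℂ)‖ ≤ (r - B) / ‖(c j : ℂ)‖})
  have hinj : ∀ j, Function.Injective fun x => c j * x + d j := fun j _ _ h =>
    mul_left_cancel₀ (hc j) (add_right_cancel h)
  have hT : ∀ j, T j ⊆ F ∩ {y | ‖(y : ℂ)‖ ≤ r} := by
    rintro j _ ⟨x, ⟨hx, hxr⟩, rfl⟩
    exact ⟨hF j (mem_image_of_mem _ hx), norm_mul_add_le_of_norm_le_div (hc j) (hd j) hxr⟩
  have hfin := finite_inter_setOf_norm_le F r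
  have hcard : ∑ j, (T j).ncard ≤ (F ∩ {y | ‖(y : ℂ)‖ ≤ r}).ncard := by
    rw [← finsum_eq_sum_of_fintype, ← ncard_iUnion_of_finite (fun j => hfin.subset (hT j))
      fun i j hij => (hdisj hij).mono (image_mono inter_subset_left) (image_mono inter_subset_left)]
    exact ncard_le_ncard (iUnion_subset hT) hfin
  simp only [T, ncard_image_of_injective _ (hinj _)] at hcard
  unfold ballCount
  exact_mod_cast hcard

end GaussianInt

namespace IsSelfSimilarGaussianInt

open GaussianInt

variable {n : ℕ} {a b : Fin n → GaussianInt} {F : Set GaussianInt}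

theorem exists_eventually_ballCount_le (hss : IsSelfSimilarGaussianInt n a b F)
    (ha : ∀ i, 1 < Zsqrtd.norm (a i)) {u : ℝ} (hu : 0 ≤ u)
    (hρ : ∑ i, (Zsqrtd.norm (a i) : ℝ) ^ (-u) < 1) :
    ∃ K, ∀ᶠ r in atTop, ballCount F r ≤ K * r ^ (2 * u) := by
  obtain ⟨B, hB⟩ := Finite.exists_le fun i => ‖(b i : ℂ)‖
  exact exists_eventually_le_mul_rpow_of_le_sum (ballCount_mono F) one_lt_sqrt_two
    (fun i => sqrt_two_le_norm (ha i)) (le_max_right B 0) (by positivity)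
    (by simpa only [norm_rpow_neg_two_mul] using hρ)
    (ballCount_le_sum_of_subset_iUnion hss.1.le
      (fun i => norm_pos.1 (zero_lt_one.trans (ha i))) fun i => (hB i).trans (le_max_left B 0))

theorem exists_eventually_le_ballCount (hss : IsSelfSimilarGaussianInt n a b F)
    (ha : ∀ i, 1 < Zsqrtd.norm (a i)) (hF : F.Nonempty) {v : ℝ} (hv : 0 ≤ v)
    (hρ : 1 < ∑ i, (Zsqrtd.norm (a i) : ℝ) ^ (-v)) :
    ∃ k > 0, ∀ᶠ r in atTop, k * r ^ (2 * v) ≤ ballCount F r := by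
  obtain ⟨B, hB⟩ := Finite.exists_le fun i => ‖(b i : ℂ)‖
  obtain ⟨x, hx⟩ := hF
  exact exists_eventually_mul_rpow_le_of_sum_le (ballCount_mono F) one_lt_sqrt_two
    (fun i => sqrt_two_le_norm (ha i)) (le_max_right B 0) (by positivity)
    (by simpa only [norm_rpow_neg_two_mul] using hρ)
    (sum_ballCount_le_of_pairwise_disjoint
      (fun i => (Set.subset_iUnion (fun i => (fun x => a i * x + b i) '' F) i).trans hss.1.ge)
      hss.2 (fun i => norm_pos.1 (zero_lt_one.trans (ha i)))
      fun i => (hB i).trans (le_max_left B 0))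
    (ballCount_norm_pos hx)

end IsSelfSimilarGaussianInt

theorem selfSimilarDim_le {F : Set GaussianInt} (hF : F.Nonempty) {n m : ℕ}
    {a b : Fin n → GaussianInt} {c d : Fin m → GaussianInt}
    (hss₁ : IsSelfSimilarGaussianInt n a b F) (ha : ∀ i, 1 < Zsqrtd.norm (a i))
    (hss₂ : IsSelfSimilarGaussianInt m c d F) (hc : ∀ j, 1 < Zsqrtd.norm (c j))
    {s t : ℝ} (hs : 0 ≤ s) (hbox₁ : ∑ i, (Zsqrtd.norm (a i) : ℝ) ^ (-s) = 1)
    (hbox₂ : ∑ j, (Zsqrtd.norm (c j) : ℝ) ^ (-t) = 1) : t ≤ s := by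
  have : Nonempty (Fin n) :=
    Finset.univ_nonempty_iff.1 (Finset.nonempty_of_sum_ne_zero (hbox₁ ▸ one_ne_zero))
  have : Nonempty (Fin m) :=
    Finset.univ_nonempty_iff.1 (Finset.nonempty_of_sum_ne_zero (hbox₂ ▸ one_ne_zero))
  refine le_of_forall_lt_imp_le_of_dense fun v hvt =>
    le_of_forall_gt_imp_ge_of_dense fun u hsu => ?_
  rcases lt_or_ge v 0 with hv | hv
  · linarith
  obtain ⟨K, hK⟩ := hss₁.exists_eventually_ballCount_le ha (hs.trans hsu.le)
    ((sum_rpow_neg_strictAnti (fun i => by exact_mod_cast ha i) hsu).trans_eq hbox₁)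
  obtain ⟨k, hk, hk'⟩ := hss₂.exists_eventually_le_ballCount hc hF hv
    (hbox₂.symm.trans_lt (sum_rpow_neg_strictAnti (fun j => by exact_mod_cast hc j) hvt))
  have := le_of_eventually_mul_rpow_le_mul_rpow_s5 hk ((hk'.and hK).mono fun _ h => h.1.trans h.2)
  linarith

/-- Well-definedness of the fractal dimension of an infinite self-similar subset
of the Gaussian integers `ℤ[i]`, with respect to the norm `N(u + vi) = u² + v²`. -/
theorem fractalDim_wellDefined_gaussianInt
    (F : Set GaussianInt) (hF : F.Infinite)
    (n : ℕ) (a b : Fin n → GaussianInt) (ha : ∀ i, 1 < Zsqrtd.norm (a i))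
    (hss₁ : IsSelfSimilarGaussianInt n a b F)
    (m : ℕ) (c d : Fin m → GaussianInt) (hc : ∀ j, 1 < Zsqrtd.norm (c j))
    (hss₂ : IsSelfSimilarGaussianInt m c d F)
    (s : ℝ) (hs : 0 ≤ s) (hbox₁ : ∑ i, ((Zsqrtd.norm (a i) : ℝ)) ^ (-s) = 1)
    (t : ℝ) (ht : 0 ≤ t) (hbox₂ : ∑ j, ((Zsqrtd.norm (c j) : ℝ)) ^ (-t) = 1) :
    s = t := by
  exact le_antisymm (selfSimilarDim_le hF.nonempty hss₂ hc hss₁ ha ht hbox₂ hbox₁)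
    (selfSimilarDim_le hF.nonempty hss₁ ha hss₂ hc hs hbox₁ hbox₂)
end

section
/- (Monotonicity of fractal dimension in the Gaussian integers.) Let $F_1 \subseteq F_2 \subseteq \mathbb{Z}[i]$ be infinite sets such that $F_1$ is self-similar with respect to affine maps $\varphi_i(x) = a_i x + b_i$ for $i = 1, \dots, n$ (with $a_i, b_i \in \mathbb{Z}[i]$, $N(a_i) > 1$) and $F_2$ is self-similar with respect to affine maps $\psi_j(x) = c_j x + d_j$ for $j = 1, \dots, m$ (with $c_j, d_j \in \mathbb{Z}[i]$, $N(c_j) > 1$), where $N$ denotes the norm $N(u + vi) = u^2 + v^2$. If $s_1 \ge 0$ satisfies $\sum_{i=1}^n N(a_i)^{-s_1} = 1$ and $s_2 \ge 0$ satisfies $\sum_{j=1}^m N(c_j)^{-s_2} = 1$, then $s_1 \le s_2$. -/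
/-!
Count the points of a set in balls: `N_F(r) = #{x ∈ F | |x| ≤ r}`. If `F` is covered by the
images `c_j F + d_j`, a point of `F` of size `≤ r` is the image of a point of size
`≤ (r + D) / |c_j|`, so `N_F(r) ≤ ∑ N_F((r + D) / |c_j|)`; with `∑ |c_j|^(-t) = 1` this
recursion forces `N_F(r) = O(r^t)`. If instead `F` is the disjoint union of the images
`a_i F + b_i`, the reverse recursion gives `N_F(r) ≳ r^t`. Since `|z|² = N(z)`, this yields
`r^(2 s₁) ≲ N_{F₁}(r) ≤ N_{F₂}(r) ≲ r^(2 s₂)`, whence `s₁ ≤ s₂`.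
-/

open Set Filter Finset

section ScaleRecursion

variable {ι : Type*} [Fintype ι] {s : ι → ℝ} {t : ℝ} (hs : ∀ i, 1 < s i)
include hs

theorem exists_one_lt_forall_le : ∃ μ, 1 < μ ∧ ∀ i, μ ≤ s i := by
  cases isEmpty_or_nonempty ι
  · exact ⟨2, one_lt_two, isEmptyElim⟩
  · obtain ⟨i₀, hi₀⟩ := Finite.exists_min s
    exact ⟨s i₀, hs i₀, hi₀⟩

theorem nonneg_of_sum_rpow_neg_eq_one (ht : ∑ i, s i ^ (-t) = 1) : 0 ≤ t := by
  by_contra! htneg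
  obtain ⟨i, -⟩ := Finset.nonempty_of_sum_ne_zero (ht.trans_ne one_ne_zero)
  have hterm : s i ^ (-t) ≤ ∑ j, s j ^ (-t) :=
    single_le_sum (fun j _ => (Real.rpow_pos_of_pos (zero_lt_one.trans (hs j)) _).le) (mem_univ i)
  linarith [Real.one_lt_rpow (hs i) (neg_pos.2 htneg)]

theorem exists_nonneg_add_le_mul {D : ℝ} (hD : 0 ≤ D) :
    ∃ B, 0 ≤ B ∧ ∀ i, B + D ≤ B * s i := by
  have hs' : ∀ i, 0 < s i - 1 := fun i => sub_pos.2 (hs i)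
  have hterm : ∀ i, 0 ≤ D / (s i - 1) := fun i => div_nonneg hD (hs' i).le
  refine ⟨∑ i, D / (s i - 1), sum_nonneg fun i _ => hterm i, fun i => ?_⟩
  have := (div_le_iff₀ (hs' i)).1 <|
    single_le_sum (f := fun i => D / (s i - 1)) (fun i _ => hterm i) (mem_univ i)
  linarith

theorem le_mul_rpow_of_le_sum_div {R₀ R₁ C : ℝ} {g : ℝ → ℝ} (ht : ∑ i, s i ^ (-t) = 1)
    (hR₀ : 0 < R₀) (hR₁ : ∀ i, R₀ * s i ≤ R₁)
    (hbase : ∀ R ∈ Icc R₀ R₁, g R ≤ C * R ^ t)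
    (hrec : ∀ R, R₁ ≤ R → g R ≤ ∑ i, g (R / s i)) {R : ℝ} (hR : R₀ ≤ R) :
    g R ≤ C * R ^ t := by
  have hs₀ : ∀ i, 0 < s i := fun i => zero_lt_one.trans (hs i)
  obtain ⟨μ, hμ, hμs⟩ := exists_one_lt_forall_le hs
  obtain ⟨i₀, -⟩ := Finset.nonempty_of_sum_ne_zero (ht.trans_ne one_ne_zero)
  have hR₁pos : 0 < R₁ := (mul_pos hR₀ (hs₀ i₀)).trans_le (hR₁ i₀)
  -- induction over the windows `[R₀, R₁ μ^k]`; each step uses `∑ i, (R / s i) ^ t = R ^ t`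
  suffices ∀ k : ℕ, ∀ R ∈ Icc R₀ (R₁ * μ ^ k), g R ≤ C * R ^ t by
    obtain ⟨k, hk⟩ := pow_unbounded_of_one_lt (R / R₁) hμ
    exact this k R ⟨hR, ((div_lt_iff₀' hR₁pos).1 hk).le⟩
  intro k
  induction k with
  | zero => simpa using hbase
  | succ k ih =>
    rintro R ⟨hR₀R, hRk⟩
    by_cases hle : R ≤ R₁ * μ ^ k
    · exact ih R ⟨hR₀R, hle⟩
    have hR₁R : R₁ ≤ R :=
      (le_mul_of_one_le_right hR₁pos.le (one_le_pow₀ hμ.le)).trans (not_le.1 hle).le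
    have hRpos : 0 < R := hR₁pos.trans_le hR₁R
    have hwindow : ∀ i, R / s i ∈ Icc R₀ (R₁ * μ ^ k) := fun i => by
      constructor
      · rw [le_div_iff₀ (hs₀ i)]; exact (hR₁ i).trans hR₁R
      · rw [div_le_iff₀ (hs₀ i)]
        calc R ≤ R₁ * μ ^ k * μ := by rwa [mul_assoc, ← pow_succ]
          _ ≤ R₁ * μ ^ k * s i := by gcongr; exact hμs i
    calc g R ≤ ∑ i, g (R / s i) := hrec R hR₁R
      _ ≤ ∑ i, C * (R / s i) ^ t := sum_le_sum fun i _ => ih _ (hwindow i)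
      _ = C * R ^ t * ∑ i, s i ^ (-t) := by
        rw [mul_sum]
        refine sum_congr rfl fun i _ => ?_
        rw [Real.div_rpow hRpos.le (hs₀ i).le, Real.rpow_neg (hs₀ i).le]
        ring
      _ = C * R ^ t := by rw [ht, mul_one]

end ScaleRecursion

theorem le_of_eventually_mul_rpow_le {a b c C : ℝ} (hc : 0 < c)
    (h : ∀ᶠ R in atTop, c * R ^ a ≤ C * R ^ b) : a ≤ b := by
  by_contra! hba
  have hgrow : Tendsto (fun R : ℝ => c * R ^ (a - b)) atTop atTop :=
    (tendsto_rpow_atTop (sub_pos.2 hba)).const_mul_atTop hc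
  obtain ⟨R, hR, hRpos, hRC⟩ :=
    (h.and ((eventually_gt_atTop 0).and (hgrow.eventually_gt_atTop C))).exists
  have hsplit : R ^ a = R ^ (a - b) * R ^ b := by
    rw [← Real.rpow_add hRpos, sub_add_cancel]
  rw [hsplit, ← mul_assoc] at hR
  exact hR.not_gt (mul_lt_mul_of_pos_right hRC (Real.rpow_pos_of_pos hRpos b))

namespace AbsoluteValue

variable {α ι : Type*} [Ring α] (abv : AbsoluteValue α ℝ)

noncomputable def ballCount (F : Set α) (r : ℝ) : ℕ := (F ∩ {x | abv x ≤ r}).ncard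

variable {abv}

theorem injective_mul_add {a : α} (ha : abv a ≠ 0) (b : α) :
    Function.Injective fun x => a * x + b := by
  intro x y h
  have : abv a * abv (x - y) = 0 := by
    rw [← map_mul, mul_sub, sub_eq_zero.2 (add_right_cancel h), map_zero]
  exact sub_eq_zero.1 (abv.eq_zero.1 ((mul_eq_zero.1 this).resolve_left ha))

theorem ncard_image_mul_add_eq_ballCount {a : α} (ha : abv a ≠ 0) (b : α) (F : Set α)
    (r : ℝ) :
    ((fun x => a * x + b) '' (F ∩ {x | abv x ≤ r})).ncard = abv.ballCount F r :=
  ncard_image_of_injective _ (injective_mul_add ha b)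

variable (hfin : ∀ r, {x | abv x ≤ r}.Finite)
include hfin

theorem ballCount_mono_left {F G : Set α} (h : F ⊆ G) (r : ℝ) :
    abv.ballCount F r ≤ abv.ballCount G r :=
  ncard_le_ncard (inter_subset_inter_left _ h) ((hfin r).inter_of_right G)

theorem ballCount_mono_right (F : Set α) : Monotone (abv.ballCount F) := fun _ r' h =>
  ncard_le_ncard (inter_subset_inter_right _ fun _ hx => le_trans hx h)
    ((hfin r').inter_of_right F)

variable [Fintype ι] {F : Set α} {a b : ι → α}

theorem ballCount_le_sum (ha : ∀ i, 0 < abv (a i))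
    (hcover : F ⊆ ⋃ i, (fun x => a i * x + b i) '' F) {D : ℝ} (hD : ∀ i, abv (b i) ≤ D)
    (r : ℝ) : abv.ballCount F r ≤ ∑ i, abv.ballCount F ((r + D) / abv (a i)) := by
  set t : ι → Set α := fun i =>
    (fun x => a i * x + b i) '' (F ∩ {x | abv x ≤ (r + D) / abv (a i)})
  have hsub : F ∩ {x | abv x ≤ r} ⊆ ⋃ i, t i := by
    rintro z ⟨hzF, hzr⟩
    obtain ⟨i, y, hyF, rfl⟩ := mem_iUnion.1 (hcover hzF)
    refine mem_iUnion_of_mem i ⟨y, ⟨hyF, ?_⟩, rfl⟩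
    change abv y ≤ _
    rw [le_div_iff₀' (ha i), ← map_mul]
    calc abv (a i * y) = abv (a i * y + b i - b i) := by rw [add_sub_cancel_right]
      _ ≤ abv (a i * y + b i) + abv (b i) := abv.sub_le_add _ _
      _ ≤ r + D := add_le_add hzr (hD i)
  refine (ncard_le_ncard hsub (finite_iUnion fun i => ((hfin _).inter_of_right F).image _)).trans ?_
  simpa only [t, ncard_image_mul_add_eq_ballCount (ha _).ne', Finset.mem_univ, iUnion_true]
    using univ.set_ncard_biUnion_le t

theorem sum_ballCount_le (ha : ∀ i, 0 < abv (a i))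
    (hmaps : ⋃ i, (fun x => a i * x + b i) '' F ⊆ F)
    (hdisj : Pairwise fun i j =>
      Disjoint ((fun x => a i * x + b i) '' F) ((fun x => a j * x + b j) '' F))
    {D : ℝ} (hD : ∀ i, abv (b i) ≤ D) (r : ℝ) :
    ∑ i, abv.ballCount F ((r - D) / abv (a i)) ≤ abv.ballCount F r := by
  set t : ι → Set α := fun i =>
    (fun x => a i * x + b i) '' (F ∩ {x | abv x ≤ (r - D) / abv (a i)})
  have hsub : ⋃ i, t i ⊆ F ∩ {x | abv x ≤ r} := by
    refine iUnion_subset fun i => ?_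
    rintro _ ⟨y, ⟨hyF, hyr⟩, rfl⟩
    refine ⟨hmaps (mem_iUnion_of_mem i (mem_image_of_mem _ hyF)), ?_⟩
    change abv y ≤ _ at hyr
    rw [le_div_iff₀' (ha i), ← map_mul] at hyr
    calc abv (a i * y + b i) ≤ abv (a i * y) + abv (b i) := abv.add_le _ _
      _ ≤ r := by linarith [hD i]
  have htfin : ∀ i, (t i).Finite := fun i => ((hfin _).inter_of_right F).image _
  have htdisj : Pairwise (Function.onFun Disjoint t) := fun i j hij =>
    (hdisj hij).mono (image_mono Set.inter_subset_left) (image_mono Set.inter_subset_left)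
  calc ∑ i, abv.ballCount F ((r - D) / abv (a i)) = ∑ i, (t i).ncard :=
        sum_congr rfl fun i _ => (ncard_image_mul_add_eq_ballCount (ha i).ne' (b i) F _).symm
    _ = (⋃ i, t i).ncard := by
        rw [ncard_iUnion_of_finite htfin htdisj, finsum_eq_sum_of_fintype]
    _ ≤ _ := ncard_le_ncard hsub ((hfin r).inter_of_right F)

variable {t : ℝ}

theorem exists_ballCount_le_mul_rpow (ha : ∀ i, 1 < abv (a i))
    (hcover : F ⊆ ⋃ i, (fun x => a i * x + b i) '' F) (ht : ∑ i, abv (a i) ^ (-t) = 1) :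
    ∃ C, ∀ᶠ r in atTop, (abv.ballCount F r : ℝ) ≤ C * r ^ t := by
  have ht₀ := nonneg_of_sum_rpow_neg_eq_one ha ht
  have hmono := ballCount_mono_right hfin F
  have hD : ∀ i, abv (b i) ≤ ∑ j, abv (b j) := fun i =>
    single_le_sum (fun j _ => abv.nonneg (b j)) (mem_univ i)
  obtain ⟨B, hB₀, hB⟩ := exists_nonneg_add_le_mul ha (sum_nonneg fun i _ => abv.nonneg (b i))
  set R₁ := ∑ i, abv (a i)
  have hR₁ : ∀ i, 1 * abv (a i) ≤ R₁ := fun i => by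
    rw [one_mul]; exact single_le_sum (fun j _ => abv.nonneg (a j)) (mem_univ i)
  -- shifting the radius by `B` absorbs the translations `b i` into the recursion
  let g : ℝ → ℝ := fun r => abv.ballCount F (r + B)
  have hbase : ∀ R ∈ Icc 1 R₁, g R ≤ g R₁ * R ^ t := fun R hR =>
    calc g R ≤ g R₁ := by simp only [g]; exact_mod_cast hmono (by linarith [hR.2])
      _ ≤ g R₁ * R ^ t :=
        le_mul_of_one_le_right (Nat.cast_nonneg _) (Real.one_le_rpow hR.1 ht₀)
  have hrec : ∀ R, R₁ ≤ R → g R ≤ ∑ i, g (R / abv (a i)) := fun R _ => by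
    have hshift : ∀ i, (R + B + ∑ j, abv (b j)) / abv (a i) ≤ R / abv (a i) + B := fun i => by
      have hai : 0 < abv (a i) := zero_lt_one.trans (ha i)
      rw [div_add' _ _ _ hai.ne', div_le_div_iff_of_pos_right hai]
      linarith [hB i]
    have := (ballCount_le_sum hfin (fun i => zero_lt_one.trans (ha i)) hcover hD (R + B)).trans
      (sum_le_sum fun i _ => hmono (hshift i))
    simp only [g]
    exact_mod_cast this
  refine ⟨g R₁, eventually_atTop.2 ⟨1, fun r hr => ?_⟩⟩
  calc (abv.ballCount F r : ℝ) ≤ g r := by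
        simp only [g]; exact_mod_cast hmono (le_add_of_nonneg_right hB₀)
    _ ≤ g R₁ * r ^ t := le_mul_rpow_of_le_sum_div ha ht one_pos hR₁ hbase hrec hr

theorem exists_mul_rpow_le_ballCount (ha : ∀ i, 1 < abv (a i)) (hF : F.Nonempty)
    (hmaps : ⋃ i, (fun x => a i * x + b i) '' F ⊆ F)
    (hdisj : Pairwise fun i j =>
      Disjoint ((fun x => a i * x + b i) '' F) ((fun x => a j * x + b j) '' F))
    (ht : ∑ i, abv (a i) ^ (-t) = 1) :
    ∃ c > 0, ∀ᶠ r in atTop, c * r ^ t ≤ abv.ballCount F r := by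
  have ht₀ := nonneg_of_sum_rpow_neg_eq_one ha ht
  have hmono := ballCount_mono_right hfin F
  have hD : ∀ i, abv (b i) ≤ ∑ j, abv (b j) := fun i =>
    single_le_sum (fun j _ => abv.nonneg (b j)) (mem_univ i)
  obtain ⟨B, hB₀, hB⟩ := exists_nonneg_add_le_mul ha (sum_nonneg fun i _ => abv.nonneg (b i))
  obtain ⟨x₀, hx₀⟩ := hF
  set R₀ := abv x₀ + B + 1
  have hR₀ : 0 < R₀ := by linarith [abv.nonneg x₀]
  set R₁ := R₀ * ∑ i, abv (a i)
  have hR₁ : ∀ i, R₀ * abv (a i) ≤ R₁ := fun i =>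
    mul_le_mul_of_nonneg_left (single_le_sum (fun j _ => abv.nonneg (a j)) (mem_univ i)) hR₀.le
  obtain ⟨i₀, -⟩ := Finset.nonempty_of_sum_ne_zero (ht.trans_ne one_ne_zero)
  have hR₁pos : 0 < R₁ := (mul_pos hR₀ (zero_lt_one.trans (ha i₀))).trans_le (hR₁ i₀)
  -- the lower bound is run through `le_mul_rpow_of_le_sum_div` for `-g`
  let g : ℝ → ℝ := fun r => -(abv.ballCount F (r - B) : ℝ)
  have hbase : ∀ R ∈ Icc R₀ R₁, g R ≤ -(R₁ ^ t)⁻¹ * R ^ t := fun R hR => by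
    have hx₀R : x₀ ∈ F ∩ {x | abv x ≤ R - B} :=
      ⟨hx₀, by change abv x₀ ≤ R - B; linarith [hR.1]⟩
    have hone : 1 ≤ abv.ballCount F (R - B) :=
      (ncard_pos ((hfin _).inter_of_right F)).2 ⟨x₀, hx₀R⟩
    have hle : (R₁ ^ t)⁻¹ * R ^ t ≤ 1 := inv_mul_le_one_of_le₀
      (Real.rpow_le_rpow (hR₀.trans_le hR.1).le hR.2 ht₀) (Real.rpow_nonneg hR₁pos.le t)
    have : (1 : ℝ) ≤ abv.ballCount F (R - B) := by exact_mod_cast hone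
    simp only [g, neg_mul]
    linarith
  have hrec : ∀ R, R₁ ≤ R → g R ≤ ∑ i, g (R / abv (a i)) := fun R _ => by
    have hshift : ∀ i, R / abv (a i) - B ≤ (R - B - ∑ j, abv (b j)) / abv (a i) := fun i => by
      have hai : 0 < abv (a i) := zero_lt_one.trans (ha i)
      rw [div_sub' hai.ne', div_le_div_iff_of_pos_right hai]
      linarith [hB i]
    have := (sum_le_sum fun i _ => hmono (hshift i)).trans
      (sum_ballCount_le hfin (fun i => zero_lt_one.trans (ha i)) hmaps hdisj hD (R - B))
    simp only [g, sum_neg_distrib, neg_le_neg_iff]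
    exact_mod_cast this
  refine ⟨(R₁ ^ t)⁻¹, inv_pos.2 (Real.rpow_pos_of_pos hR₁pos t),
    eventually_atTop.2 ⟨R₀, fun r hr => ?_⟩⟩
  have hlow := le_mul_rpow_of_le_sum_div ha ht hR₀ hR₁ hbase hrec hr
  have : (abv.ballCount F (r - B) : ℝ) ≤ abv.ballCount F r := by
    exact_mod_cast hmono (sub_le_self r hB₀)
  simp only [g, neg_mul] at hlow
  linarith

end AbsoluteValue

noncomputable def gaussianAbv : AbsoluteValue GaussianInt ℝ where
  toFun z := ‖(z : ℂ)‖
  map_mul' z w := by simp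
  nonneg' z := norm_nonneg _
  eq_zero' z := by simp
  add_le' z w := by simpa using norm_add_le (z : ℂ) w

theorem gaussianAbv_sq (z : GaussianInt) : gaussianAbv z ^ 2 = (z.norm : ℝ) := by
  rw [GaussianInt.intCast_real_norm, ← Complex.sq_norm]; rfl

theorem intCast_norm_rpow (z : GaussianInt) (u : ℝ) :
    (z.norm : ℝ) ^ u = gaussianAbv z ^ (2 * u) := by
  rw [← gaussianAbv_sq, Real.rpow_mul (gaussianAbv.nonneg z), Real.rpow_two]

theorem one_lt_gaussianAbv {z : GaussianInt} (hz : 1 < z.norm) : 1 < gaussianAbv z := by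
  rw [← one_lt_sq_iff₀ (gaussianAbv.nonneg z), gaussianAbv_sq]
  exact_mod_cast hz

theorem finite_setOf_gaussianAbv_le (r : ℝ) : {z | gaussianAbv z ≤ r}.Finite := by
  have hinj : Function.Injective fun z : GaussianInt => (z.re, z.im) :=
    fun z w h => Zsqrtd.ext (congrArg Prod.fst h) (congrArg Prod.snd h)
  refine ((isCompact_closedBall (0 : ℤ × ℤ) r).finite_of_discrete.preimage
    hinj.injOn).subset ?_
  intro z (hz : ‖(z : ℂ)‖ ≤ r)
  simp only [Set.mem_preimage, mem_closedBall_zero_iff, Prod.norm_def, Int.norm_eq_abs, sup_le_iff]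
  rw [GaussianInt.intCast_re, GaussianInt.intCast_im]
  exact ⟨(Complex.abs_re_le_norm _).trans hz, (Complex.abs_im_le_norm _).trans hz⟩

theorem fractalDim_mono_gaussianInt_general
    (F₁ F₂ : Set GaussianInt) (hsub : F₁ ⊆ F₂) (hF₁ : F₁.Infinite)
    (n : ℕ) (a b : Fin n → GaussianInt) (ha : ∀ i, 1 < Zsqrtd.norm (a i))
    (hss₁ : IsSelfSimilarGaussianInt n a b F₁)
    (m : ℕ) (c d : Fin m → GaussianInt) (hc : ∀ j, 1 < Zsqrtd.norm (c j))
    (hss₂ : IsSelfSimilarGaussianInt m c d F₂)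
    (s₁ : ℝ) (hbox₁ : ∑ i, ((Zsqrtd.norm (a i) : ℝ)) ^ (-s₁) = 1)
    (s₂ : ℝ) (hbox₂ : ∑ j, ((Zsqrtd.norm (c j) : ℝ)) ^ (-s₂) = 1) :
    s₁ ≤ s₂ := by
  simp only [intCast_norm_rpow, mul_neg] at hbox₁ hbox₂
  obtain ⟨c₀, hc₀, hlow⟩ := AbsoluteValue.exists_mul_rpow_le_ballCount
    finite_setOf_gaussianAbv_le (fun i => one_lt_gaussianAbv (ha i)) hF₁.nonempty hss₁.1.ge
    hss₁.2 hbox₁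
  obtain ⟨C, hupp⟩ := AbsoluteValue.exists_ballCount_le_mul_rpow
    finite_setOf_gaussianAbv_le (fun j => one_lt_gaussianAbv (hc j)) hss₂.1.le hbox₂
  have hmono := AbsoluteValue.ballCount_mono_left finite_setOf_gaussianAbv_le hsub
  have hexp : 2 * s₁ ≤ 2 * s₂ := le_of_eventually_mul_rpow_le hc₀ <|
    (hlow.and hupp).mono fun r ⟨h₁, h₂⟩ => h₁.trans ((Nat.cast_le.2 (hmono r)).trans h₂)
  linarith

/-- Monotonicity of the fractal dimension for nested infinite self-similar subsets
of the Gaussian integers `ℤ[i]`, with respect to the norm `N(u + vi) = u² + v²`. -/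
theorem fractalDim_mono_gaussianInt
    (F₁ F₂ : Set GaussianInt) (hsub : F₁ ⊆ F₂) (hF₁ : F₁.Infinite) (hF₂ : F₂.Infinite)
    (n : ℕ) (a b : Fin n → GaussianInt) (ha : ∀ i, 1 < Zsqrtd.norm (a i))
    (hss₁ : IsSelfSimilarGaussianInt n a b F₁)
    (m : ℕ) (c d : Fin m → GaussianInt) (hc : ∀ j, 1 < Zsqrtd.norm (c j))
    (hss₂ : IsSelfSimilarGaussianInt m c d F₂)
    (s₁ : ℝ) (hs₁ : 0 ≤ s₁) (hbox₁ : ∑ i, ((Zsqrtd.norm (a i) : ℝ)) ^ (-s₁) = 1)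
    (s₂ : ℝ) (hs₂ : 0 ≤ s₂) (hbox₂ : ∑ j, ((Zsqrtd.norm (c j) : ℝ)) ^ (-s₂) = 1) :
    s₁ ≤ s₂ :=
  fractalDim_mono_gaussianInt_general F₁ F₂ hsub hF₁ n a b ha hss₁ m c d hc hss₂ s₁ hbox₁ s₂ hbox₂
end
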